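/- arXiv:1904.12173 — 4 statements merged into one kernel-verified Lean document; each statement's English description precedes it below -/
import Mathlib

section
/- Let n be an odd prime with n ≥ 5, and let A be the (n-1)×(n-1) matrix over ℚ with entries A_{ij} = ⟨ij/n⟩ for 1 ≤ i, j ≤ n-1. For each integer k with 1 ≤ k ≤ (n-3)/2, let x^{(k)} ∈ ℚ^{n-1} be the vector whose j-th coordinate is 1 if j = k or j = n-k, is -1 if j = (n-1)/2 or j = (n+1)/2, and is 0 otherwise. Then A·x^{(k)} = 0 for every such k. -/
/-!
Row `i` of `A` evaluated on `x⁽ᵏ⁾` is `⟨ck/n⟩ + ⟨c(n-k)/n⟩ - ⟨cm/n⟩ - ⟨c(m+1)/n⟩` with `c = i + 1`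
and `n = 2m + 1`. Both pairs of indices sum to `n`, and for `a + b = n` the numbers `ca/n` and
`cb/n` are non-integers (as `n` is prime) adding up to an integer, so their fractional parts add
up to `1`. Hence the two pairs cancel.
-/

open Int Matrix

theorem Int.fract_natCast_div_add_fract_natCast_div_eq_one {K : Type*} [Field K] [LinearOrder K]
    [IsStrictOrderedRing K] [FloorRing K] {n p q : ℕ} (hpq : n ∣ p + q) (hp : ¬ n ∣ p) :
    fract ((p : K) / n) + fract ((q : K) / n) = 1 := by
  have hn : (n : K) ≠ 0 := by
    intro hn
    exact hp (by simp_all)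
  have hp_fract : fract ((p : K) / n) ≠ 0 := by
    rw [fract_div_natCast_eq_div_natCast_mod]
    exact div_ne_zero (by exact_mod_cast fun h => hp (Nat.dvd_of_mod_eq_zero h)) hn
  obtain ⟨t, ht⟩ := hpq
  have ht : (p : K) + q = n * t := by exact_mod_cast ht
  have hq : fract ((q : K) / n) = fract (-((p : K) / n)) :=
    fract_eq_fract.2 ⟨t, by field_simp; push_cast; linear_combination ht⟩
  rw [hq, fract_neg hp_fract]
  ring

theorem Nat.Prime.fract_mul_div_add_fract_mul_div_eq_one {K : Type*} [Field K] [LinearOrder K]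
    [IsStrictOrderedRing K] [FloorRing K] {n a b c : ℕ} (hn : n.Prime) (hc : ¬ n ∣ c)
    (ha : 0 < a) (hb : 0 < b) (hab : a + b = n) :
    fract (((c * a : ℕ) : K) / n) + fract (((c * b : ℕ) : K) / n) = 1 := by
  refine fract_natCast_div_add_fract_natCast_div_eq_one ⟨c, by rw [← mul_add, hab, mul_comm]⟩ ?_
  intro hca
  rcases hn.dvd_mul.1 hca with hnc | hna
  · exact hc hnc
  · exact ha.ne' (Nat.eq_zero_of_dvd_of_lt hna (by omega))

theorem stmt_1_general (n : ℕ) (hn : n.Prime) (hodd : Odd n)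
    (A : Matrix (Fin (n - 1)) (Fin (n - 1)) ℚ)
    (hA : ∀ i j : Fin (n - 1),
      A i j = Int.fract ((((i.val + 1) * (j.val + 1) : ℕ) : ℚ) / (n : ℚ)))
    (k : ℕ) (hk1 : 1 ≤ k) (hk2 : k ≤ (n - 3) / 2)
    (x : Fin (n - 1) → ℚ)
    (hx : ∀ j : Fin (n - 1),
      x j = if j.val + 1 = k ∨ j.val + 1 = n - k then 1
        else if j.val + 1 = (n - 1) / 2 ∨ j.val + 1 = (n + 1) / 2 then -1
        else 0) :
    A.mulVec x = 0 := by
  obtain ⟨m, rfl⟩ := hodd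
  have hx_single : x = Pi.single ⟨k - 1, by omega⟩ 1 + Pi.single ⟨2 * m - k, by omega⟩ 1
      - (Pi.single ⟨m - 1, by omega⟩ 1 + Pi.single ⟨m, by omega⟩ 1) := by
    funext j
    rw [hx j]
    simp only [Pi.add_apply, Pi.sub_apply, Pi.single_apply, Fin.ext_iff]
    split_ifs <;> first | (exfalso; omega) | norm_num
  funext i
  have hi : ¬ 2 * m + 1 ∣ i.val + 1 := fun h => by
    have := Nat.le_of_dvd (by omega) h
    omega
  rw [hx_single, mulVec_sub, mulVec_add, mulVec_add]
  simp only [mulVec_single_one, Pi.add_apply, Pi.sub_apply, col_apply, hA, Pi.zero_apply]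
  rw [hn.fract_mul_div_add_fract_mul_div_eq_one hi (by omega) (by omega) (by omega),
    hn.fract_mul_div_add_fract_mul_div_eq_one hi (by omega) (by omega) (by omega), sub_self]

/-- For an odd prime `n ≥ 5`, let `A` be the `(n-1) × (n-1)` matrix over `ℚ` whose `(i,j)`
entry (for `1 ≤ i, j ≤ n-1`) is the fractional part `⟨ij/n⟩`. For each `1 ≤ k ≤ (n-3)/2`,
the vector `x^{(k)}` whose `j`-th coordinate is `1` if `j = k` or `j = n-k`, is `-1` if
`j = (n-1)/2` or `j = (n+1)/2`, and `0` otherwise, lies in the kernel of `A`. -/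
theorem stmt_1 (n : ℕ) (hn : n.Prime) (hodd : Odd n) (hn5 : 5 ≤ n)
    (A : Matrix (Fin (n - 1)) (Fin (n - 1)) ℚ)
    (hA : ∀ i j : Fin (n - 1),
      A i j = Int.fract ((((i.val + 1) * (j.val + 1) : ℕ) : ℚ) / (n : ℚ)))
    (k : ℕ) (hk1 : 1 ≤ k) (hk2 : k ≤ (n - 3) / 2)
    (x : Fin (n - 1) → ℚ)
    (hx : ∀ j : Fin (n - 1),
      x j = if j.val + 1 = k ∨ j.val + 1 = n - k then 1
        else if j.val + 1 = (n - 1) / 2 ∨ j.val + 1 = (n + 1) / 2 then -1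
        else 0) :
    A.mulVec x = 0 :=
  stmt_1_general n hn hodd A hA k hk1 hk2 x hx
end

section
/- Fix a finite field 𝔽_q and a prime p ≥ 3, and for real s > 1 and monic irreducible Q ∈ 𝔽_q[x] let Z_Q(s) = (1 + ∑_{i=0}^{p-3} |Q|^{(i+1)-(i+2)s} - ∑_{i=0}^{p-2} |Q|^{i-(i+2)s}) / (1 - |Q|^{(p-1)-ps}). Then there exists a positive real number L such that (s-1)^{p-1} · ∏_Q Z_Q(s) tends to L as s → 1 from the right (the product over monic irreducible Q being convergent for each s > 1). In other words, the Dirichlet series counting Artin–Schreier covers has a pole of order exactly p-1 at s = 1. -/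
/-!
Write `x_i = |Q|^{i-(i+1)s}`. Then `Z_Q(s) = ∏_{i=1}^{p-1} (1 - x_i)⁻¹ · E_Q(s)` with
`E_Q(s) = (1 + ∑_{i<p-1} x_i) ∏_{i<p-1} (1 - x_i)`. Unique factorisation in `𝔽_q[x]` and the
count `q^n` of monic polynomials of degree `n` give the Euler product
`∏_Q (1 - c^{deg Q})⁻¹ = (1 - qc)⁻¹` for `0 ≤ c < 1/q`. Hence each
`∏_Q (1 - x_i)⁻¹ = (1 - q^{(i+1)(1-s)})⁻¹` has a simple pole at `s = 1` with residue
`1/((i+1) log q)`. Since `0 ≤ x_i ≤ |Q|⁻¹`, one has `|E_Q(s) - 1| ≤ (p-1)² |Q|⁻²` uniformly in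
`s ≥ 1`, so `∏_Q E_Q(s)` converges, is continuous at `s = 1` by dominated convergence, and is
positive there.
-/

open Polynomial Filter Topology Finset UniqueFactorizationMonoid

theorem Real.hasProd_of_isLUB_of_one_le {ι : Type*} {f : ι → ℝ} {a : ℝ} (h : ∀ i, 1 ≤ f i)
    (hf : IsLUB (Set.range fun s : Finset ι => ∏ i ∈ s, f i) a) : HasProd f a :=
  tendsto_atTop_isLUB (fun _ _ hst => prod_le_prod_of_subset_of_one_le hst
    (fun i _ => zero_le_one.trans (h i)) fun i _ _ => h i) hf

theorem tendsto_sub_one_mul_inv_one_sub_rpow {a b : ℝ} (ha : 0 < a) (hb : 1 < b) :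
    Tendsto (fun s => (s - 1) * (1 - b ^ (a * (1 - s)))⁻¹) (𝓝[≠] 1) (𝓝 (a * Real.log b)⁻¹) := by
  have hderiv : HasDerivAt (fun s : ℝ => 1 - b ^ (a * (1 - s))) (a * Real.log b) 1 := by
    refine ((((hasDerivAt_id (1 : ℝ)).const_sub 1).const_mul a).const_rpow
      (zero_lt_one.trans hb)).const_sub 1 |>.congr_deriv ?_
    simp only [id, sub_self, mul_zero, Real.rpow_zero]
    ring
  refine (hderiv.tendsto_slope.inv₀ (mul_pos ha (Real.log_pos hb)).ne').congr fun s => ?_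
  simp [slope_def_field, div_eq_mul_inv]

theorem one_sub_sum_le_prod_one_sub {ι : Type*} (s : Finset ι) {x : ι → ℝ}
    (hx0 : ∀ i ∈ s, 0 ≤ x i) (hx1 : ∀ i ∈ s, x i ≤ 1) :
    1 - ∑ i ∈ s, x i ≤ ∏ i ∈ s, (1 - x i) := by
  classical
  induction s using Finset.induction with
  | empty => simp
  | insert a s ha ih =>
    rw [sum_insert ha, prod_insert ha]
    have h := ih (fun i hi => hx0 i (mem_insert_of_mem hi)) fun i hi => hx1 i (mem_insert_of_mem hi)
    have ha0 := hx0 a (mem_insert_self a s)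
    have ha1 := hx1 a (mem_insert_self a s)
    have hs0 : 0 ≤ ∑ i ∈ s, x i := sum_nonneg fun i hi => hx0 i (mem_insert_of_mem hi)
    nlinarith [mul_le_mul_of_nonneg_left h (sub_nonneg.mpr ha1)]

theorem prod_one_sub_le_exp_neg_sum {ι : Type*} (s : Finset ι) {x : ι → ℝ}
    (hx1 : ∀ i ∈ s, x i ≤ 1) :
    ∏ i ∈ s, (1 - x i) ≤ Real.exp (-∑ i ∈ s, x i) := by
  rw [← sum_neg_distrib, Real.exp_sum]
  exact prod_le_prod (fun i hi => sub_nonneg.mpr (hx1 i hi)) fun i _ => Real.one_sub_le_exp_neg _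

namespace Polynomial

variable {F : Type*} [Field F]

abbrev MonicIrreducible (F : Type*) [Field F] := {Q : F[X] // Q.Monic ∧ Irreducible Q}

section Factorization

variable [DecidableEq F] (B : Finset (MonicIrreducible F))

theorem normalizedFactors_prod_pow (e : B → ℕ) :
    normalizedFactors (∏ Q : B, Q.1.1 ^ e Q) = ∑ Q : B, e Q • {Q.1.1} := by
  have hirr : ∀ g ∈ (∑ Q : B, e Q • {Q.1.1} : Multiset F[X]), g.Monic ∧ Irreducible g := by
    simp only [Multiset.mem_sum, Multiset.mem_nsmul, Multiset.mem_singleton]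
    rintro g ⟨Q, -, -, rfl⟩
    exact Q.1.2
  have hprod : ∏ Q : B, Q.1.1 ^ e Q = (∑ Q : B, e Q • {Q.1.1} : Multiset F[X]).prod := by
    simp [Multiset.prod_sum, Multiset.prod_nsmul]
  rw [hprod, normalizedFactors_prod_eq _ fun g hg => (hirr g hg).2]
  exact (Multiset.map_congr rfl fun g hg => (hirr g hg).1.normalize_eq_self).trans
    (Multiset.map_id' _)

theorem count_normalizedFactors_prod_pow (e : B → ℕ) (Q : B) :
    (normalizedFactors (∏ P : B, P.1.1 ^ e P)).count Q.1.1 = e Q := by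
  rw [normalizedFactors_prod_pow, Multiset.count_sum', sum_eq_single Q]
  · simp
  · intro P _ hPQ
    simp only [Multiset.count_nsmul, Multiset.count_singleton, mul_ite, mul_one, mul_zero,
      ite_eq_right_iff]
    exact fun h => absurd (Subtype.ext (Subtype.ext h.symm)) hPQ
  · simp

theorem prod_pow_injective : Function.Injective fun e : B → ℕ => ∏ Q : B, Q.1.1 ^ e Q := by
  intro e e' h
  funext Q
  simpa only [count_normalizedFactors_prod_pow] using
    congrArg (fun f => (normalizedFactors f).count Q.1.1) h

theorem prod_pow_count_normalizedFactors {f : F[X]} (hf : f.Monic)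
    (hB : (normalizedFactors f).toFinset ⊆ B.map (Function.Embedding.subtype _)) :
    ∏ Q : B, Q.1.1 ^ (normalizedFactors f).count Q.1.1 = f := by
  calc ∏ Q : B, Q.1.1 ^ (normalizedFactors f).count Q.1.1
      = ∏ g ∈ B.map (Function.Embedding.subtype _), g ^ (normalizedFactors f).count g := by
        rw [prod_map]
        exact prod_coe_sort B fun Q => Q.1 ^ (normalizedFactors f).count Q.1
    _ = f := by
        rw [← prod_multiset_count_of_subset _ _ hB, prod_normalizedFactors_eq hf.ne_zero,
          hf.normalize_eq_self]

theorem prod_geom_sum_eq_sum_image (c : ℝ) (K : ℕ) :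
    ∏ Q ∈ B, ∑ k ∈ range K, (c ^ Q.1.natDegree) ^ k =
      ∑ f ∈ (Fintype.piFinset fun _ : B => range K).image
        (fun e => ∏ Q : B, Q.1.1 ^ e Q), c ^ f.natDegree := by
  rw [sum_image fun e _ e' _ h => prod_pow_injective B h, ← prod_coe_sort, prod_univ_sum]
  refine sum_congr rfl fun e _ => ?_
  rw [natDegree_prod_of_monic _ _ fun Q _ => Q.1.2.1.pow _, ← prod_pow_eq_pow_sum]
  simp only [natDegree_pow, pow_mul']

end Factorization

variable [Fintype F] {c : ℝ}

theorem hasSum_pow_natDegree_monic (hc : 0 ≤ c) (hqc : Fintype.card F * c < 1) :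
    HasSum (fun f : {f : F[X] // f.Monic} => c ^ f.1.natDegree) (1 - Fintype.card F * c)⁻¹ := by
  have hfiber (n : ℕ) :
      HasSum (fun f : {f : {f : F[X] // f.Monic} // f.1.natDegree = n} => c ^ f.1.1.natDegree)
        ((Fintype.card F * c) ^ n) := by
    let e := (Equiv.subtypeSubtypeEquivSubtypeInter (fun f : F[X] => f.Monic)
      (·.natDegree = n)).trans ((monicEquivDegreeLT n).trans (degreeLTEquiv F n).toEquiv)
    have : Fintype {f : {f : F[X] // f.Monic} // f.1.natDegree = n} := Fintype.ofEquiv _ e.symm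
    convert hasSum_fintype _
    rw [sum_congr rfl fun f _ => by rw [f.2], sum_const, card_univ, Fintype.card_congr e]
    simp [mul_pow]
  rw [← (Equiv.sigmaFiberEquiv fun f : {f : F[X] // f.Monic} => f.1.natDegree).hasSum_iff]
  refine HasSum.sigma_of_hasSum (hasSum_geometric_of_lt_one (by positivity) hqc) hfiber ?_
  refine (summable_sigma_of_nonneg fun _ => pow_nonneg hc _).mpr ⟨fun n => (hfiber n).summable, ?_⟩
  simpa [(hfiber _).tsum_eq] using summable_geometric_of_lt_one (by positivity) hqc

theorem sum_pow_natDegree_le_of_monic (hc : 0 ≤ c) (hqc : Fintype.card F * c < 1)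
    (T : Finset F[X]) (hT : ∀ f ∈ T, f.Monic) :
    ∑ f ∈ T, c ^ f.natDegree ≤ (1 - Fintype.card F * c)⁻¹ := by
  classical
  rw [← sum_subtype_of_mem _ hT]
  exact sum_le_hasSum _ (fun _ _ => pow_nonneg hc _) (hasSum_pow_natDegree_monic hc hqc)

theorem summable_pow_natDegree (hc : 0 ≤ c) (hqc : Fintype.card F * c < 1) :
    Summable fun Q : MonicIrreducible F => c ^ Q.1.natDegree :=
  (hasSum_pow_natDegree_monic hc hqc).summable.comp_injective
    (i := fun Q : MonicIrreducible F => (⟨Q.1, Q.2.1⟩ : {f : F[X] // f.Monic}))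
    fun _ _ h => by simpa [Subtype.ext_iff] using h

theorem summable_inv_sq_pow_natDegree :
    Summable fun Q : MonicIrreducible F => ((Fintype.card F : ℝ) ^ 2)⁻¹ ^ Q.1.natDegree := by
  have hq : (1 : ℝ) < Fintype.card F := Nat.one_lt_cast.mpr Fintype.one_lt_card
  refine summable_pow_natDegree (by positivity) ?_
  rw [sq, mul_inv, ← mul_assoc, mul_inv_cancel₀ (by positivity), one_mul]
  exact inv_lt_one_of_one_lt₀ hq

theorem pow_natDegree_lt_one (hc : 0 ≤ c) (hqc : Fintype.card F * c < 1)
    (Q : MonicIrreducible F) : c ^ Q.1.natDegree < 1 := by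
  have hc1 : c ≤ Fintype.card F * c :=
    le_mul_of_one_le_left hc (Nat.one_le_cast.mpr Fintype.card_pos)
  exact pow_lt_one₀ hc (hc1.trans_lt hqc) Q.2.2.natDegree_pos.ne'

theorem prod_inv_one_sub_pow_natDegree_le (hc : 0 ≤ c) (hqc : Fintype.card F * c < 1)
    (B : Finset (MonicIrreducible F)) :
    ∏ Q ∈ B, (1 - c ^ Q.1.natDegree)⁻¹ ≤ (1 - Fintype.card F * c)⁻¹ := by
  classical
  have hgeom : Tendsto (fun K => ∏ Q ∈ B, ∑ k ∈ range K, (c ^ Q.1.natDegree) ^ k) atTop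
      (𝓝 (∏ Q ∈ B, (1 - c ^ Q.1.natDegree)⁻¹)) :=
    tendsto_finsetProd _ fun Q _ => (hasSum_geometric_of_lt_one (pow_nonneg hc _)
      (pow_natDegree_lt_one hc hqc Q)).tendsto_sum_nat
  refine le_of_tendsto' hgeom fun K => ?_
  rw [prod_geom_sum_eq_sum_image]
  refine sum_pow_natDegree_le_of_monic hc hqc _ fun f hf => ?_
  obtain ⟨e, -, rfl⟩ := mem_image.mp hf
  exact monic_prod_of_monic _ _ fun Q _ => Q.1.2.1.pow _

theorem exists_sum_pow_natDegree_le_prod (hc : 0 ≤ c) (hqc : Fintype.card F * c < 1)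
    (T : Finset {f : F[X] // f.Monic}) :
    ∃ B : Finset (MonicIrreducible F),
      ∑ f ∈ T, c ^ f.1.natDegree ≤ ∏ Q ∈ B, (1 - c ^ Q.1.natDegree)⁻¹ := by
  classical
  let B : Finset (MonicIrreducible F) :=
    (T.biUnion fun f => (normalizedFactors f.1).toFinset).subtype _
  let K := T.sup (fun f => Multiset.card (normalizedFactors f.1)) + 1
  have hsub : T.map (Function.Embedding.subtype Monic) ⊆
      (Fintype.piFinset fun _ : B => range K).image fun e => ∏ Q : B, Q.1.1 ^ e Q := by
    intro g hg
    obtain ⟨f, hf, rfl⟩ := mem_map.mp hg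
    refine mem_image.mpr ⟨fun Q => (normalizedFactors f.1).count Q.1.1, ?_,
      prod_pow_count_normalizedFactors B f.2 fun g hg => ?_⟩
    · simp only [Fintype.mem_piFinset, mem_range]
      exact fun Q => Nat.lt_succ_of_le ((Multiset.count_le_card _ _).trans
        (le_sup (f := fun f => Multiset.card (normalizedFactors f.1)) hf))
    · obtain ⟨hirr, hmonic, -⟩ :=
        (Polynomial.mem_normalizedFactors_iff f.2.ne_zero).mp (Multiset.mem_toFinset.mp hg)
      exact mem_map.mpr ⟨⟨g, hmonic, hirr⟩, mem_subtype.mpr (mem_biUnion.mpr ⟨f, hf, hg⟩), rfl⟩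
  refine ⟨B, ?_⟩
  calc ∑ f ∈ T, c ^ f.1.natDegree
      = ∑ g ∈ T.map (Function.Embedding.subtype Monic), c ^ g.natDegree := by
        rw [sum_map]; rfl
    _ ≤ ∑ g ∈ (Fintype.piFinset fun _ : B => range K).image
          (fun e => ∏ Q : B, Q.1.1 ^ e Q), c ^ g.natDegree :=
        sum_le_sum_of_subset_of_nonneg hsub fun _ _ _ => pow_nonneg hc _
    _ = ∏ Q ∈ B, ∑ k ∈ range K, (c ^ Q.1.natDegree) ^ k :=
        (prod_geom_sum_eq_sum_image B c K).symm
    _ ≤ ∏ Q ∈ B, (1 - c ^ Q.1.natDegree)⁻¹ := by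
        refine prod_le_prod (fun Q _ => sum_nonneg fun _ _ => by positivity)
          fun Q _ => sum_le_hasSum _ (fun _ _ => by positivity)
            (hasSum_geometric_of_lt_one (pow_nonneg hc _) (pow_natDegree_lt_one hc hqc Q))

theorem hasProd_inv_one_sub_pow_natDegree (hc : 0 ≤ c) (hqc : Fintype.card F * c < 1) :
    HasProd (fun Q : MonicIrreducible F => (1 - c ^ Q.1.natDegree)⁻¹)
      (1 - Fintype.card F * c)⁻¹ := by
  refine Real.hasProd_of_isLUB_of_one_le (fun Q => ?_) ⟨?_, fun b hb => ?_⟩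
  · exact one_le_inv₀ (sub_pos.mpr (pow_natDegree_lt_one hc hqc Q)) |>.mpr
      (sub_le_self _ (pow_nonneg hc _))
  · rintro _ ⟨B, rfl⟩
    exact prod_inv_one_sub_pow_natDegree_le hc hqc B
  · refine (isLUB_hasSum (fun _ => pow_nonneg hc _) (hasSum_pow_natDegree_monic hc hqc)).2 ?_
    rintro _ ⟨T, rfl⟩
    obtain ⟨B, hB⟩ := exists_sum_pow_natDegree_le_prod hc hqc T
    exact hB.trans (hb ⟨B, rfl⟩)

abbrev MonicIrreducible.absNorm (Q : MonicIrreducible F) : ℝ :=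
  (Fintype.card F : ℝ) ^ Q.1.natDegree

theorem MonicIrreducible.one_lt_absNorm (Q : MonicIrreducible F) : 1 < Q.absNorm :=
  one_lt_pow₀ (Nat.one_lt_cast.mpr Fintype.one_lt_card) Q.2.2.natDegree_pos.ne'

end Polynomial

namespace ArtinSchreier

noncomputable def correction (n : ℕ) (x : ℕ → ℝ) : ℝ :=
  (1 + ∑ i ∈ range n, x i) * ∏ i ∈ range n, (1 - x i)

variable {x : ℕ → ℝ}

theorem correction_pos (n : ℕ) (hx0 : ∀ i, 0 ≤ x i) (hx1 : ∀ i, x i < 1) :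
    0 < correction n x :=
  mul_pos (add_pos_of_pos_of_nonneg one_pos (sum_nonneg fun i _ => hx0 i))
    (prod_pos fun i _ => sub_pos.mpr (hx1 i))

theorem abs_correction_sub_one_le (n : ℕ) (hx0 : ∀ i, 0 ≤ x i) (hx1 : ∀ i, x i ≤ 1) :
    |correction n x - 1| ≤ (∑ i ∈ range n, x i) ^ 2 := by
  set T := ∑ i ∈ range n, x i
  have hT : 0 ≤ T := sum_nonneg fun i _ => hx0 i
  have hlower : 1 - T ^ 2 ≤ correction n x := by
    have := one_sub_sum_le_prod_one_sub (range n) (fun i _ => hx0 i) fun i _ => hx1 i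
    calc 1 - T ^ 2 = (1 + T) * (1 - T) := by ring
      _ ≤ correction n x := mul_le_mul_of_nonneg_left this (by positivity)
  have hupper : correction n x ≤ 1 := by
    have := prod_one_sub_le_exp_neg_sum (range n) fun i _ => hx1 i
    calc correction n x ≤ Real.exp T * Real.exp (-T) :=
          mul_le_mul (by linarith [Real.add_one_le_exp T]) this
            (prod_nonneg fun i _ => sub_nonneg.mpr (hx1 i)) (Real.exp_pos _).le
      _ = 1 := by rw [← Real.exp_add, add_neg_cancel, Real.exp_zero]
  rw [abs_le]
  constructor <;> nlinarith

theorem div_eq_prod_inv_mul_correction (n : ℕ) (hx : ∀ i, x i ≠ 1) :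
    (1 + ∑ i ∈ range n, x (i + 1) - ∑ i ∈ range (n + 1), x 0 * x i) / (1 - x (n + 1)) =
      (∏ i ∈ range (n + 1), (1 - x (i + 1)))⁻¹ * correction (n + 1) x := by
  have hx' : ∀ i, 1 - x i ≠ 0 := fun i => sub_ne_zero.mpr (hx i).symm
  have htel : (∏ i ∈ range (n + 1), (1 - x i)) * (1 - x (n + 1)) =
      (1 - x 0) * ∏ i ∈ range (n + 1), (1 - x (i + 1)) := by
    rw [← prod_range_succ (fun i => 1 - x i), prod_range_succ']
    ring
  have hnum : 1 + ∑ i ∈ range n, x (i + 1) - ∑ i ∈ range (n + 1), x 0 * x i =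
      (1 - x 0) * (1 + ∑ i ∈ range (n + 1), x i) := by
    rw [← mul_sum, sum_range_succ']
    ring
  rw [hnum, correction, div_eq_iff (hx' _), inv_mul_eq_div, div_mul_eq_mul_div,
    eq_div_iff (prod_ne_zero_iff.mpr fun i _ => hx' (i + 1))]
  linear_combination (-(1 + ∑ i ∈ range (n + 1), x i)) * htel

noncomputable def powTerm (N s : ℝ) (i : ℕ) : ℝ := N ^ ((i : ℝ) - (i + 1) * s)

variable {N s : ℝ}

theorem powTerm_nonneg (hN : 0 ≤ N) (i : ℕ) : 0 ≤ powTerm N s i := Real.rpow_nonneg hN _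

theorem powTerm_le_inv (hN : 1 ≤ N) (hs : 1 ≤ s) (i : ℕ) : powTerm N s i ≤ N⁻¹ := by
  rw [← Real.rpow_neg_one]
  exact Real.rpow_le_rpow_of_exponent_le hN (by nlinarith [(i.cast_nonneg : (0 : ℝ) ≤ i)])

theorem powTerm_lt_one (hN : 1 < N) (hs : 1 ≤ s) (i : ℕ) : powTerm N s i < 1 :=
  (powTerm_le_inv hN.le hs i).trans_lt (inv_lt_one_of_one_lt₀ hN)

theorem continuous_powTerm (hN : 0 < N) (i : ℕ) : Continuous fun s => powTerm N s i :=
  continuous_const.rpow (by fun_prop) fun _ => Or.inl hN.ne'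

theorem localFactor_eq_prod_inv_mul_correction {p : ℕ} (hp : 2 ≤ p) (hN : 1 < N) (hs : 1 ≤ s) :
    (1 + ∑ i ∈ range (p - 2), N ^ (((i : ℝ) + 1) - ((i : ℝ) + 2) * s)
        - ∑ i ∈ range (p - 1), N ^ ((i : ℝ) - ((i : ℝ) + 2) * s)) /
      (1 - N ^ (((p : ℝ) - 1) - (p : ℝ) * s)) =
    (∏ i ∈ range (p - 1), (1 - powTerm N s (i + 1)))⁻¹ * correction (p - 1) (powTerm N s) := by
  obtain ⟨n, rfl⟩ := Nat.exists_eq_add_of_le' hp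
  have h1 (i : ℕ) : N ^ (((i : ℝ) + 1) - ((i : ℝ) + 2) * s) = powTerm N s (i + 1) := by
    rw [powTerm]; push_cast; ring_nf
  have h2 (i : ℕ) : N ^ ((i : ℝ) - ((i : ℝ) + 2) * s) = powTerm N s 0 * powTerm N s i := by
    rw [powTerm, powTerm, ← Real.rpow_add (by linarith)]; push_cast; ring_nf
  have h3 : N ^ ((((n + 2 : ℕ) : ℝ)) - 1 - ((n + 2 : ℕ) : ℝ) * s) = powTerm N s (n + 1) := by
    rw [powTerm]; push_cast; ring_nf
  simp only [h1, h2, h3, Nat.add_sub_cancel, show n + 2 - 1 = n + 1 by omega]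
  exact div_eq_prod_inv_mul_correction n fun i => (powTerm_lt_one hN hs i).ne

variable {F : Type*} [Field F] [Fintype F]

theorem hasProd_inv_one_sub_powTerm (hs : 1 < s) (i : ℕ) :
    HasProd (fun Q : MonicIrreducible F => (1 - powTerm Q.absNorm s i)⁻¹)
      (1 - (Fintype.card F : ℝ) ^ (((i : ℝ) + 1) * (1 - s)))⁻¹ := by
  have hq : (1 : ℝ) < Fintype.card F := Nat.one_lt_cast.mpr Fintype.one_lt_card
  set c := (Fintype.card F : ℝ) ^ ((i : ℝ) - (i + 1) * s)
  have hqc : (Fintype.card F : ℝ) * c = (Fintype.card F : ℝ) ^ (((i : ℝ) + 1) * (1 - s)) := by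
    rw [show ((i : ℝ) + 1) * (1 - s) = 1 + ((i : ℝ) - (i + 1) * s) by ring,
      Real.rpow_add (by linarith), Real.rpow_one]
  have hqc1 : (Fintype.card F : ℝ) * c < 1 :=
    hqc ▸ Real.rpow_lt_one_of_one_lt_of_neg hq (by nlinarith [(i.cast_nonneg : (0 : ℝ) ≤ i)])
  rw [← hqc]
  convert hasProd_inv_one_sub_pow_natDegree (Real.rpow_nonneg (by linarith) _) hqc1 using 3 with Q
  rw [powTerm, Real.rpow_pow_comm (by positivity)]

theorem abs_correction_powTerm_sub_one_le (n : ℕ) (hs : 1 ≤ s) (Q : MonicIrreducible F) :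
    |correction n (powTerm Q.absNorm s) - 1| ≤
      n ^ 2 * ((Fintype.card F : ℝ) ^ 2)⁻¹ ^ Q.1.natDegree := by
  have hN := Q.one_lt_absNorm.le
  have hsum : ∑ i ∈ range n, powTerm Q.absNorm s i ≤ n * Q.absNorm⁻¹ := by
    simpa using sum_le_sum fun i (_ : i ∈ range n) => powTerm_le_inv hN hs i
  calc |correction n (powTerm Q.absNorm s) - 1| ≤ (∑ i ∈ range n, powTerm Q.absNorm s i) ^ 2 :=
        abs_correction_sub_one_le n (powTerm_nonneg (by linarith))
          fun i => (powTerm_le_inv hN hs i).trans (inv_le_one_of_one_le₀ hN)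
    _ ≤ (n * Q.absNorm⁻¹) ^ 2 :=
        pow_le_pow_left₀ (sum_nonneg fun i _ => powTerm_nonneg (by linarith) i) hsum 2
    _ = n ^ 2 * ((Fintype.card F : ℝ) ^ 2)⁻¹ ^ Q.1.natDegree := by
        rw [MonicIrreducible.absNorm]; ring

theorem summable_correction_powTerm_sub_one (n : ℕ) (hs : 1 ≤ s) :
    Summable fun Q : MonicIrreducible F => correction n (powTerm Q.absNorm s) - 1 :=
  Summable.of_norm_bounded (summable_inv_sq_pow_natDegree.mul_left _)
    (abs_correction_powTerm_sub_one_le n hs)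

theorem multipliable_correction_powTerm (n : ℕ) (hs : 1 ≤ s) :
    Multipliable fun Q : MonicIrreducible F => correction n (powTerm Q.absNorm s) := by
  simpa using Real.multipliable_one_add_of_summable (summable_correction_powTerm_sub_one n hs)

theorem tprod_correction_powTerm_pos (n : ℕ) (hs : 1 ≤ s) :
    0 < ∏' Q : MonicIrreducible F, correction n (powTerm Q.absNorm s) := by
  have hpos (Q : MonicIrreducible F) : 0 < correction n (powTerm Q.absNorm s) :=
    correction_pos n (powTerm_nonneg (by positivity)) (powTerm_lt_one Q.one_lt_absNorm hs)
  rw [← Real.rexp_tsum_eq_tprod hpos]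
  · exact Real.exp_pos _
  · simpa using Real.summable_log_one_add_of_summable (summable_correction_powTerm_sub_one n hs)

theorem tendsto_tprod_correction_powTerm (n : ℕ) :
    Tendsto (fun s => ∏' Q : MonicIrreducible F, correction n (powTerm Q.absNorm s)) (𝓝[>] 1)
      (𝓝 (∏' Q : MonicIrreducible F, correction n (powTerm Q.absNorm 1))) := by
  have hcont (Q : MonicIrreducible F) : Continuous fun s => correction n (powTerm Q.absNorm s) := by
    have := continuous_powTerm (zero_lt_one.trans Q.one_lt_absNorm)
    unfold correction
    fun_prop
  have h := tendsto_tprod_one_add_of_dominated_convergence (𝓕 := 𝓝[>] (1 : ℝ))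
    (summable_inv_sq_pow_natDegree.mul_left ((n : ℝ) ^ 2))
    (f := fun s (Q : MonicIrreducible F) => correction n (powTerm Q.absNorm s) - 1)
    (g := fun Q => correction n (powTerm Q.absNorm 1) - 1)
    (fun Q => (((hcont Q).tendsto 1).mono_left nhdsWithin_le_nhds).sub_const 1)
    (eventually_nhdsWithin_of_forall fun s hs => abs_correction_powTerm_sub_one_le n (le_of_lt hs))
  simpa using h

end ArtinSchreier

theorem stmt_13_general (Fq : Type*) [Field Fq] [Fintype Fq] (p : ℕ) (hp3 : 3 ≤ p)
    (Z : {Q : Fq[X] // Q.Monic ∧ Irreducible Q} → ℝ → ℝ)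
    (hZ : ∀ Q s, Z Q s =
      (1 + (∑ i ∈ Finset.range (p - 2),
            ((Fintype.card Fq : ℝ) ^ Q.1.natDegree) ^ (((i : ℝ) + 1) - ((i : ℝ) + 2) * s))
        - ∑ i ∈ Finset.range (p - 1),
            ((Fintype.card Fq : ℝ) ^ Q.1.natDegree) ^ ((i : ℝ) - ((i : ℝ) + 2) * s)) /
        (1 - ((Fintype.card Fq : ℝ) ^ Q.1.natDegree) ^ (((p : ℝ) - 1) - (p : ℝ) * s))) :
    ∃ L : ℝ, 0 < L ∧
      (∀ s : ℝ, 1 < s → Multipliable (fun Q => Z Q s)) ∧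
      Tendsto (fun s : ℝ => (s - 1) ^ (p - 1) *
          ∏' Q : {Q : Fq[X] // Q.Monic ∧ Irreducible Q}, Z Q s)
        (𝓝[>] (1 : ℝ)) (𝓝 L) := by
  open ArtinSchreier in
  have hq : (1 : ℝ) < Fintype.card Fq := Nat.one_lt_cast.mpr Fintype.one_lt_card
  let E s := ∏' Q : MonicIrreducible Fq, correction (p - 1) (powTerm Q.absNorm s)
  have hprod (s : ℝ) (hs : 1 < s) : HasProd (fun Q => Z Q s)
      ((∏ i ∈ range (p - 1),
        (1 - (Fintype.card Fq : ℝ) ^ ((((i + 1 : ℕ) : ℝ) + 1) * (1 - s)))⁻¹) * E s) := by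
    convert (hasProd_prod fun i _ => hasProd_inv_one_sub_powTerm hs (i + 1)).mul
      (multipliable_correction_powTerm (p - 1) hs.le).hasProd using 1
    funext Q
    rw [hZ, prod_inv_distrib]
    exact localFactor_eq_prod_inv_mul_correction (by omega)
      (MonicIrreducible.one_lt_absNorm Q) hs.le
  refine ⟨(∏ i ∈ range (p - 1), ((((i + 1 : ℕ) : ℝ) + 1) * Real.log (Fintype.card Fq))⁻¹) * E 1,
    mul_pos (prod_pos fun i _ => inv_pos.mpr (mul_pos (by positivity) (Real.log_pos hq)))
      (tprod_correction_powTerm_pos _ le_rfl),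
    fun s hs => (hprod s hs).multipliable, ?_⟩
  have hpole := tendsto_finsetProd (range (p - 1)) fun i _ =>
    (tendsto_sub_one_mul_inv_one_sub_rpow (a := ((i + 1 : ℕ) : ℝ) + 1) (by positivity)
      hq).mono_left (nhdsGT_le_nhdsNE 1)
  refine (hpole.mul (tendsto_tprod_correction_powTerm (p - 1))).congr'
    (eventually_nhdsWithin_of_forall fun s hs => ?_)
  dsimp only
  rw [(hprod s hs).tprod_eq, prod_mul_distrib, prod_const, card_range, mul_assoc]

/-- Over a finite field `𝔽_q` with `p ≥ 3` a prime, the Euler product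
`∏_Q Z_Q(s)` (over monic irreducible `Q`, convergent for each `s > 1`) satisfies:
there is a positive real `L` with `(s-1)^{p-1} · ∏_Q Z_Q(s) → L` as `s → 1⁺`,
i.e. the Dirichlet series counting Artin–Schreier covers has a pole of order exactly
`p-1` at `s = 1`. -/
theorem stmt_13 (Fq : Type*) [Field Fq] [Fintype Fq] (p : ℕ) (hp : p.Prime) (hp3 : 3 ≤ p)
    (Z : {Q : Fq[X] // Q.Monic ∧ Irreducible Q} → ℝ → ℝ)
    (hZ : ∀ Q s, Z Q s =
      (1 + (∑ i ∈ Finset.range (p - 2),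
            ((Fintype.card Fq : ℝ) ^ Q.1.natDegree) ^ (((i : ℝ) + 1) - ((i : ℝ) + 2) * s))
        - ∑ i ∈ Finset.range (p - 1),
            ((Fintype.card Fq : ℝ) ^ Q.1.natDegree) ^ ((i : ℝ) - ((i : ℝ) + 2) * s)) /
        (1 - ((Fintype.card Fq : ℝ) ^ Q.1.natDegree) ^ (((p : ℝ) - 1) - (p : ℝ) * s))) :
    ∃ L : ℝ, 0 < L ∧
      (∀ s : ℝ, 1 < s → Multipliable (fun Q => Z Q s)) ∧
      Tendsto (fun s : ℝ => (s - 1) ^ (p - 1) *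
          ∏' Q : {Q : Fq[X] // Q.Monic ∧ Irreducible Q}, Z Q s)
        (𝓝[>] (1 : ℝ)) (𝓝 L) :=
  stmt_13_general Fq p hp3 Z hZ
end

section
/- Fix a finite field 𝔽_q. For each integer d ≥ 0, let B(d) = ∑_D ∏_{Q ∣ D} (|Q| - 1), the sum over all monic squarefree polynomials D ∈ 𝔽_q[x] of degree d, where the inner product is over the distinct monic irreducible polynomials Q dividing D. Then, as d → ∞, the ratio B(d)/q^{2d} tends to ∏_Q (1 - 2·|Q|^{-2} + |Q|^{-3}), the product over all monic irreducible polynomials Q ∈ 𝔽_q[x] (which converges to a positive real number). -/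
/-!
Write `q = #𝔽_q` and `u = q⁻²`. Sending a monic squarefree `D` to its set of prime factors
identifies `B(d)` with the coefficient of `X^d` in
`S_J = ∏_{deg Q ≤ J} (1 + (|Q| - 1) X^{deg Q})` for every `J ≥ d`. Unique factorization gives
`∑_{k ≤ j} μ_k q^{j-k} = [j = 0]` for the Möbius sums `μ_k = ∑ (-1)^#T` over sets `T` of primes
of total degree `k`, so `μ = (1, -q, 0, 0, …)` and `M_J = ∏_{deg Q ≤ J} (1 - |Q| X^{deg Q})` is
`1 - q² X` modulo `X^{J+1}`. Hence the coefficients `c_j` of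
`E_J = M_J S_J = ∏_{deg Q ≤ J} (1 - X^{deg Q} - (|Q|² - |Q|) X^{2 deg Q})` telescope,
`∑_{j ≤ J} c_j u^j = B(J) u^J`, whereas `E_J(u) = ∏_{deg Q ≤ J} (1 - 2|Q|^{-2} + |Q|^{-3})`.
The tail `∑_{j > J} c_j u^j` is `O((4/5)^J)`: the coefficients of `E_J` are dominated by those
of `∏ (1 + X^{deg Q} + |Q|² X^{2 deg Q})`, whose value at `5u/4` is bounded independently of `J`
because there are at most `q^n` primes of degree `n`. The same count makes `∑_Q |Q|^{-2}`
converge, so the Euler product converges to a positive limit.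
-/

open Filter Topology Finset UniqueFactorizationMonoid

theorem sum_range_mul_pow_succ {R : Type*} [CommRing R] (a : ℕ → R) (t : R) (j : ℕ) :
    ∑ k ∈ range (j + 2), a k * t ^ (j + 1 - k)
      = a (j + 1) + t * ∑ k ∈ range (j + 1), a k * t ^ (j - k) := by
  rw [sum_range_succ, Nat.sub_self, pow_zero, mul_one, add_comm, mul_sum]
  congr 1
  refine sum_congr rfl fun k hk => ?_
  rw [Nat.sub_add_comm (Nat.lt_succ_iff.1 (mem_range.1 hk)), pow_succ]
  ring

namespace Polynomial

theorem coeff_prod_one_add_C_mul_X_pow {R ι : Type*} [CommSemiring R] (s : Finset ι)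
    (c : ι → R) (e : ι → ℕ) (j : ℕ) :
    (∏ i ∈ s, (1 + C (c i) * X ^ e i)).coeff j
      = ∑ t ∈ s.powerset with ∑ i ∈ t, e i = j, ∏ i ∈ t, c i := by
  classical
  simp only [prod_one_add, prod_mul_distrib, ← map_prod, prod_pow_eq_pow_sum, finsetSum_coeff,
    coeff_C_mul_X_pow, sum_filter, eq_comm]

theorem coeff_mul_eq_of_coeff_eq {R : Type*} [Semiring R] {p p' : R[X]} {j : ℕ}
    (h : ∀ k ≤ j, p.coeff k = p'.coeff k) (r : R[X]) :
    (p * r).coeff j = (p' * r).coeff j := by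
  simp only [coeff_mul]
  exact sum_congr rfl fun x hx => by rw [h x.1 (HasAntidiagonal.antidiagonal.fst_le hx)]

theorem sum_range_coeff_one_sub_C_mul_X_mul {K : Type*} [Field K] {t : K} (ht : t ≠ 0)
    (p : K[X]) (d : ℕ) :
    ∑ j ∈ range (d + 1), ((1 - C t * X) * p).coeff j * t⁻¹ ^ j = p.coeff d * t⁻¹ ^ d := by
  induction d with
  | zero => simp
  | succ d ih =>
    rw [sum_range_succ, ih, sub_mul, one_mul, coeff_sub, mul_assoc, coeff_C_mul, coeff_X_mul,
      pow_succ]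
    field_simp
    ring

theorem abs_coeff_prod_le {ι : Type*} (s : Finset ι) (p P : ι → ℝ[X])
    (h : ∀ i ∈ s, ∀ n, |(p i).coeff n| ≤ (P i).coeff n) (n : ℕ) :
    |(∏ i ∈ s, p i).coeff n| ≤ (∏ i ∈ s, P i).coeff n := by
  classical
  induction s using Finset.cons_induction generalizing n with
  | empty => by_cases hn : n = 0 <;> simp [coeff_one, hn]
  | cons a s ha ih =>
    have hs := ih (fun i hi => h i (mem_cons_of_mem hi))
    have ha := h a (mem_cons_self a s)
    rw [prod_cons, prod_cons, coeff_mul, coeff_mul]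
    refine (abs_sum_le_sum_abs _ _).trans (sum_le_sum fun x _ => ?_)
    rw [abs_mul]
    exact mul_le_mul (ha x.1) (hs x.2) (abs_nonneg _) ((abs_nonneg _).trans (ha x.1))

theorem abs_eval_sub_sum_range_le {p P : ℝ[X]} (h : ∀ n, |p.coeff n| ≤ P.coeff n) {u r : ℝ}
    (hu : 0 ≤ u) (hr : 0 < r) (hur : u ≤ r) (d : ℕ) :
    |p.eval u - ∑ j ∈ range (d + 1), p.coeff j * u ^ j| ≤ P.eval r * (u / r) ^ (d + 1) := by
  set N := max (max p.natDegree P.natDegree) d + 1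
  have hP : ∀ j, 0 ≤ P.coeff j := fun j => (abs_nonneg _).trans (h j)
  have hdN : d + 1 ≤ N := by omega
  rw [eval_eq_sum_range' (n := N) (by omega), eval_eq_sum_range' (n := N) (by omega),
    ← sum_range_add_sum_Ico _ hdN, add_sub_cancel_left]
  calc |∑ j ∈ Ico (d + 1) N, p.coeff j * u ^ j|
      ≤ ∑ j ∈ Ico (d + 1) N, P.coeff j * r ^ j * (u / r) ^ (d + 1) := by
        refine (abs_sum_le_sum_abs _ _).trans (sum_le_sum fun j hj => ?_)
        have hu_eq : u ^ j = r ^ j * (u / r) ^ j := by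
          rw [← mul_pow, mul_div_cancel₀ _ hr.ne']
        rw [abs_mul, abs_of_nonneg (pow_nonneg hu _), hu_eq, mul_assoc]
        exact mul_le_mul (h j) (mul_le_mul_of_nonneg_left (pow_le_pow_of_le_one (by positivity)
          ((div_le_one hr).2 hur) (mem_Ico.1 hj).1) (by positivity)) (by positivity) (hP j)
    _ ≤ (∑ j ∈ range N, P.coeff j * r ^ j) * (u / r) ^ (d + 1) := by
        rw [← sum_mul, ← sum_range_add_sum_Ico _ hdN]
        exact mul_le_mul_of_nonneg_right (le_add_of_nonneg_left
          (sum_nonneg fun j _ => mul_nonneg (hP j) (pow_nonneg hr.le j))) (by positivity)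

section Factorization

variable {F : Type*} [Field F]

section MonicIrreducibleSet

variable {S : Finset F[X]} (hS : ∀ Q ∈ S, Q.Monic ∧ Irreducible Q)
include hS

theorem monic_prod_of_monicIrreducible : (∏ Q ∈ S, Q).Monic :=
  monic_prod_of_monic _ _ fun Q hQ => (hS Q hQ).1

theorem natDegree_prod_of_monicIrreducible :
    (∏ Q ∈ S, Q).natDegree = ∑ Q ∈ S, Q.natDegree :=
  natDegree_prod _ _ fun Q hQ => (hS Q hQ).2.ne_zero

variable [DecidableEq F]

theorem primeFactors_prod_of_monicIrreducible : primeFactors (∏ Q ∈ S, Q) = S := by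
  classical
  rw [← toFinset_normalizedFactors, prod_eq_multiset_prod, Multiset.map_id',
    normalizedFactors_prod_eq _ fun Q hQ => (hS Q hQ).2,
    Multiset.map_congr rfl fun Q hQ => (hS Q hQ).1.normalize_eq_self, Multiset.map_id',
    val_toFinset]

theorem squarefree_prod_of_monicIrreducible : Squarefree (∏ Q ∈ S, Q) := by
  have := squarefree_radical (a := ∏ Q ∈ S, Q)
  rwa [radical, primeFactors_prod_of_monicIrreducible hS] at this

theorem prod_dvd_iff_subset_primeFactors {f : F[X]} (hf : f ≠ 0) :
    ∏ Q ∈ S, Q ∣ f ↔ S ⊆ primeFactors f := by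
  have := radical_dvd_iff_primeFactors_subset (a := ∏ Q ∈ S, Q) hf
  rwa [radical, primeFactors_prod_of_monicIrreducible hS] at this

theorem prod_mul_divByMonic_prod {f : F[X]} (hf : f ≠ 0) (hSf : S ⊆ primeFactors f) :
    (∏ Q ∈ S, Q) * (f /ₘ ∏ Q ∈ S, Q) = f := by
  obtain ⟨c, hc⟩ := (prod_dvd_iff_subset_primeFactors hS hf).2 hSf
  rw [hc, mul_divByMonic_cancel_left _ (monic_prod_of_monicIrreducible hS)]

end MonicIrreducibleSet

variable [DecidableEq F]

theorem mem_primeFactors_iff {f Q : F[X]} (hf : f ≠ 0) :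
    Q ∈ primeFactors f ↔ (Q.Monic ∧ Irreducible Q) ∧ Q ∣ f := by
  rw [UniqueFactorizationMonoid.mem_primeFactors, Polynomial.mem_normalizedFactors_iff hf]
  tauto

theorem monicIrreducible_of_subset_primeFactors {f : F[X]} (hf : f ≠ 0) {S : Finset F[X]}
    (hSf : S ⊆ primeFactors f) : ∀ Q ∈ S, Q.Monic ∧ Irreducible Q :=
  fun _ hQ => ((mem_primeFactors_iff hf).1 (hSf hQ)).1

theorem prod_primeFactors_of_squarefree {D : F[X]} (hD : D.Monic) (hsq : Squarefree D) :
    ∏ Q ∈ primeFactors D, Q = D := by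
  rw [prod_eq_multiset_prod, Multiset.map_id',
    primeFactors_val_eq_normalizedFactors hsq.isRadical, prod_normalizedFactors_eq hD.ne_zero,
    hD.normalize_eq_self]

theorem sum_powerset_primeFactors_neg_one_pow {f : F[X]} (hf : f.Monic) :
    ∑ T ∈ (primeFactors f).powerset, (-1 : ℤ) ^ #T = if f = 1 then 1 else 0 := by
  simp only [sum_powerset_neg_one_pow_card, primeFactors_eq_empty_iff hf.ne_zero, hf.isUnit_iff]

end Factorization

section FiniteField

variable (F : Type*) [Field F] [Fintype F]

noncomputable instance fintypeMonicNatDegreeEq (n : ℕ) :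
    Fintype {p : F[X] // p.Monic ∧ p.natDegree = n} :=
  Fintype.ofEquiv _ ((monicEquivDegreeLT n).trans (degreeLTEquiv F n).toEquiv).symm

noncomputable def monicsOfDegree (n : ℕ) : Finset F[X] :=
  univ.map (Function.Embedding.subtype fun p : F[X] => p.Monic ∧ p.natDegree = n)

open scoped Classical in
noncomputable def monicIrreduciblesOfDegree (n : ℕ) : Finset F[X] :=
  {p ∈ monicsOfDegree F n | Irreducible p}

open scoped Classical in
noncomputable def monicIrreduciblesUpTo (J : ℕ) : Finset F[X] :=
  (range (J + 1)).biUnion (monicIrreduciblesOfDegree F)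

open scoped Classical in
noncomputable def primeSets (d : ℕ) : Finset (Finset F[X]) :=
  {S ∈ (monicIrreduciblesUpTo F d).powerset | ∑ Q ∈ S, Q.natDegree = d}

variable {F}

theorem mem_monicsOfDegree {n : ℕ} {p : F[X]} :
    p ∈ monicsOfDegree F n ↔ p.Monic ∧ p.natDegree = n := by
  simp [monicsOfDegree]

theorem card_monicsOfDegree (n : ℕ) : #(monicsOfDegree F n) = Fintype.card F ^ n := by
  rw [monicsOfDegree, card_map, card_univ,
    Fintype.card_congr ((monicEquivDegreeLT n).trans (degreeLTEquiv F n).toEquiv)]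
  simp

theorem mem_monicIrreduciblesOfDegree {n : ℕ} {p : F[X]} :
    p ∈ monicIrreduciblesOfDegree F n ↔ (p.Monic ∧ Irreducible p) ∧ p.natDegree = n := by
  simp only [monicIrreduciblesOfDegree, mem_filter, mem_monicsOfDegree]
  tauto

theorem card_monicIrreduciblesOfDegree_le (n : ℕ) :
    #(monicIrreduciblesOfDegree F n) ≤ Fintype.card F ^ n := by
  classical
  exact (card_filter_le _ _).trans_eq (card_monicsOfDegree n)

theorem mem_monicIrreduciblesUpTo {J : ℕ} {p : F[X]} :
    p ∈ monicIrreduciblesUpTo F J ↔ (p.Monic ∧ Irreducible p) ∧ p.natDegree ≤ J := by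
  simp [monicIrreduciblesUpTo, mem_monicIrreduciblesOfDegree, and_comm]

theorem monicIrreduciblesUpTo_mono : Monotone (monicIrreduciblesUpTo F) := fun _ _ hJ _ hp =>
  mem_monicIrreduciblesUpTo.2 ⟨(mem_monicIrreduciblesUpTo.1 hp).1,
    (mem_monicIrreduciblesUpTo.1 hp).2.trans hJ⟩

theorem sum_monicIrreduciblesUpTo_pow_le {t : ℝ} (ht₀ : 0 ≤ t) (ht₁ : t < 1) (J : ℕ) :
    ∑ Q ∈ monicIrreduciblesUpTo F J, (t / Fintype.card F) ^ Q.natDegree ≤ (1 - t)⁻¹ := by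
  classical
  have hdisj : ((range (J + 1) : Finset ℕ) : Set ℕ).PairwiseDisjoint
      (monicIrreduciblesOfDegree F) := fun m _ n _ hmn => disjoint_left.2 fun p hm hn =>
    hmn ((mem_monicIrreduciblesOfDegree.1 hm).2.symm.trans (mem_monicIrreduciblesOfDegree.1 hn).2)
  have hq : (0 : ℝ) < Fintype.card F := by exact_mod_cast Fintype.card_pos
  rw [monicIrreduciblesUpTo, sum_biUnion hdisj]
  calc _ ≤ ∑ n ∈ range (J + 1), t ^ n := by
        refine sum_le_sum fun n _ => ?_
        rw [sum_congr rfl fun Q hQ => by rw [(mem_monicIrreduciblesOfDegree.1 hQ).2], sum_const,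
          nsmul_eq_mul, div_pow, ← mul_div_assoc, mul_comm, mul_div_assoc]
        refine mul_le_of_le_one_right (pow_nonneg ht₀ n) ((div_le_one (by positivity)).2 ?_)
        exact_mod_cast card_monicIrreduciblesOfDegree_le n
    _ ≤ (1 - t)⁻¹ := by
        have := geom_sum_Ico_le_of_lt_one ht₀ ht₁ (m := 0) (n := J + 1)
        rwa [← range_eq_Ico, pow_zero, one_div] at this

theorem mem_primeSets {d : ℕ} {S : Finset F[X]} :
    S ∈ primeSets F d ↔ (∀ Q ∈ S, Q.Monic ∧ Irreducible Q) ∧ ∑ Q ∈ S, Q.natDegree = d := by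
  simp only [primeSets, mem_filter, mem_powerset, subset_iff, mem_monicIrreduciblesUpTo]
  refine ⟨fun ⟨hS, hd⟩ => ⟨fun Q hQ => (hS hQ).1, hd⟩,
    fun ⟨hS, hd⟩ => ⟨fun Q hQ => ⟨hS Q hQ, ?_⟩, hd⟩⟩
  exact hd ▸ single_le_sum (fun _ _ => Nat.zero_le _) hQ

theorem filter_powerset_monicIrreduciblesUpTo {j J : ℕ} (hj : j ≤ J) :
    {S ∈ (monicIrreduciblesUpTo F J).powerset | ∑ Q ∈ S, Q.natDegree = j} = primeSets F j := by
  ext S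
  simp only [mem_filter, mem_powerset, subset_iff, mem_monicIrreduciblesUpTo, mem_primeSets]
  refine ⟨fun ⟨hS, hd⟩ => ⟨fun Q hQ => (hS hQ).1, hd⟩,
    fun ⟨hS, hd⟩ => ⟨fun Q hQ => ⟨hS Q hQ, ?_⟩, hd⟩⟩
  exact (hd ▸ single_le_sum (fun _ _ => Nat.zero_le _) hQ).trans hj

variable [DecidableEq F]

theorem sum_squarefree_eq_sum_primeSets {M : Type*} [AddCommMonoid M] (g : Finset F[X] → M)
    (d : ℕ) [DecidablePred fun D : F[X] => Squarefree D] :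
    ∑ D ∈ monicsOfDegree F d with Squarefree D, g (primeFactors D) = ∑ S ∈ primeSets F d, g S := by
  refine sum_nbij' primeFactors (fun S => ∏ Q ∈ S, Q) (fun D hD => ?_) (fun S hS => ?_)
    (fun D hD => ?_) (fun S hS => ?_) fun _ _ => rfl
  · obtain ⟨⟨hmon, hdeg⟩, hsq⟩ := by simpa [mem_monicsOfDegree] using hD
    have hS := monicIrreducible_of_subset_primeFactors hmon.ne_zero subset_rfl
    rw [mem_primeSets, ← natDegree_prod_of_monicIrreducible hS,
      prod_primeFactors_of_squarefree hmon hsq, hdeg]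
    exact ⟨hS, rfl⟩
  · obtain ⟨hS, hdeg⟩ := mem_primeSets.1 hS
    rw [mem_filter, mem_monicsOfDegree]
    exact ⟨⟨monic_prod_of_monicIrreducible hS, hdeg ▸ natDegree_prod_of_monicIrreducible hS⟩,
      squarefree_prod_of_monicIrreducible hS⟩
  · obtain ⟨⟨hmon, -⟩, hsq⟩ := by simpa [mem_monicsOfDegree] using hD
    exact prod_primeFactors_of_squarefree hmon hsq
  · exact primeFactors_prod_of_monicIrreducible (mem_primeSets.1 hS).1

/-- Reindexing along `(k, T, c) ↦ (∏ T * c, T)`, whose inverse is `(f, T) ↦ (deg ∏ T, T, f /ₘ ∏ T)`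
by unique factorization. -/
theorem sum_sigma_primeSets_monicsOfDegree {M : Type*} [AddCommMonoid M] (g : Finset F[X] → M)
    (j : ℕ) :
    ∑ x ∈ (range (j + 1)).sigma fun k => primeSets F k ×ˢ monicsOfDegree F (j - k), g x.2.1
      = ∑ y ∈ (monicsOfDegree F j).sigma fun f => (primeFactors f).powerset, g y.2 := by
  refine sum_nbij' (fun x => ⟨(∏ Q ∈ x.2.1, Q) * x.2.2, x.2.1⟩)
    (fun y => ⟨∑ Q ∈ y.2, Q.natDegree, y.2, y.1 /ₘ ∏ Q ∈ y.2, Q⟩) ?_ ?_ ?_ ?_ fun _ _ => rfl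
  · rintro ⟨k, S, c⟩ hx
    simp only [mem_sigma, mem_range, mem_product, mem_primeSets,
      mem_monicsOfDegree] at hx
    obtain ⟨hk, ⟨hS, rfl⟩, hc, hcdeg⟩ := hx
    have hP := monic_prod_of_monicIrreducible hS
    simp only [mem_sigma, mem_powerset, mem_monicsOfDegree]
    refine ⟨⟨hP.mul hc, ?_⟩,
      (prod_dvd_iff_subset_primeFactors hS (hP.mul hc).ne_zero).1 (dvd_mul_right _ _)⟩
    rw [natDegree_mul hP.ne_zero hc.ne_zero, natDegree_prod_of_monicIrreducible hS, hcdeg]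
    omega
  · rintro ⟨f, T⟩ hy
    simp only [mem_sigma, mem_powerset, mem_monicsOfDegree] at hy
    obtain ⟨⟨hf, hfdeg⟩, hT⟩ := hy
    have hS := monicIrreducible_of_subset_primeFactors hf.ne_zero hT
    have hP := monic_prod_of_monicIrreducible hS
    have hfac := prod_mul_divByMonic_prod hS hf.ne_zero hT
    have hc : (f /ₘ ∏ Q ∈ T, Q).Monic := hP.of_mul_monic_left (by rwa [hfac])
    have hdeg := congrArg natDegree hfac
    rw [natDegree_mul hP.ne_zero hc.ne_zero, natDegree_prod_of_monicIrreducible hS, hfdeg] at hdeg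
    simp only [mem_sigma, mem_range, mem_product, mem_monicsOfDegree]
    exact ⟨by omega, mem_primeSets.2 ⟨hS, rfl⟩, hc, by omega⟩
  · rintro ⟨k, S, c⟩ hx
    simp only [mem_sigma, mem_product, mem_primeSets] at hx
    rw [mul_divByMonic_cancel_left _ (monic_prod_of_monicIrreducible hx.2.1.1), hx.2.1.2]
  · rintro ⟨f, T⟩ hy
    simp only [mem_sigma, mem_powerset, mem_monicsOfDegree] at hy
    simp only [prod_mul_divByMonic_prod (monicIrreducible_of_subset_primeFactors hy.1.1.ne_zero hy.2)
      hy.1.1.ne_zero hy.2]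

theorem sum_range_sum_primeSets_mul_pow (j : ℕ) :
    ∑ k ∈ range (j + 1), (∑ S ∈ primeSets F k, (-1 : ℤ) ^ #S) * Fintype.card F ^ (j - k)
      = if j = 0 then 1 else 0 := by
  calc _ = ∑ x ∈ (range (j + 1)).sigma fun k => primeSets F k ×ˢ monicsOfDegree F (j - k),
        (-1 : ℤ) ^ #x.2.1 := by
        rw [sum_sigma]
        refine sum_congr rfl fun k _ => ?_
        rw [sum_product, sum_mul]
        simp [card_monicsOfDegree, mul_comm]
    _ = ∑ f ∈ monicsOfDegree F j, if f = 1 then 1 else 0 := by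
        rw [sum_sigma_primeSets_monicsOfDegree (fun S => (-1 : ℤ) ^ #S), sum_sigma]
        exact sum_congr rfl fun f hf =>
          sum_powerset_primeFactors_neg_one_pow (mem_monicsOfDegree.1 hf).1
    _ = if j = 0 then 1 else 0 := by
        simp [sum_ite_eq', mem_monicsOfDegree, eq_comm]

theorem sum_primeSets_neg_one_pow (d : ℕ) :
    ∑ S ∈ primeSets F d, (-1 : ℤ) ^ #S
      = if d = 0 then 1 else if d = 1 then -(Fintype.card F : ℤ) else 0 := by
  cases d with
  | zero => simpa using sum_range_sum_primeSets_mul_pow (F := F) 0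
  | succ d =>
    have h := sum_range_sum_primeSets_mul_pow (F := F) (d + 1)
    rw [sum_range_mul_pow_succ, sum_range_sum_primeSets_mul_pow] at h
    rcases d with _ | d <;> simp at h ⊢ <;> linarith

end FiniteField

end Polynomial

namespace ArtinSchreierCount

open Polynomial

noncomputable def eulerFactor (a : ℝ) : ℝ := 1 - 2 * a ^ (-2 : ℝ) + a ^ (-3 : ℝ)

noncomputable def eulerFactorPoly (a : ℝ) (n : ℕ) : ℝ[X] := 1 - X ^ n - C (a ^ 2 - a) * X ^ (2 * n)

noncomputable def eulerFactorMajorant (a : ℝ) (n : ℕ) : ℝ[X] :=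
  1 + X ^ n + C (a ^ 2) * X ^ (2 * n)

theorem eulerFactor_eq (a : ℝ) : eulerFactor a = 1 - 2 * (a ^ 2)⁻¹ + (a ^ 3)⁻¹ := by
  simp [eulerFactor, Real.rpow_neg_ofNat]

theorem eulerFactor_pos {a : ℝ} (ha : 2 ≤ a) : 0 < eulerFactor a := by
  rw [eulerFactor_eq]
  have : 2 * (a ^ 2)⁻¹ ≤ 1 / 2 := by
    rw [← div_eq_mul_inv, div_le_div_iff₀ (by positivity) (by norm_num)]
    nlinarith
  have : 0 < (a ^ 3)⁻¹ := by positivity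
  linarith

theorem abs_eulerFactor_sub_one_le {a : ℝ} (ha : 1 ≤ a) :
    |eulerFactor a - 1| ≤ 2 * (a ^ 2)⁻¹ := by
  rw [eulerFactor_eq, abs_le]
  have : (a ^ 3)⁻¹ ≤ (a ^ 2)⁻¹ := inv_anti₀ (by positivity) (pow_le_pow_right₀ ha (by norm_num))
  have : 0 ≤ (a ^ 3)⁻¹ := by positivity
  constructor <;> linarith

theorem eulerFactorPoly_eq_mul (a : ℝ) (n : ℕ) :
    eulerFactorPoly a n = (1 + C (-a) * X ^ n) * (1 + C (a - 1) * X ^ n) := by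
  rw [eulerFactorPoly, mul_comm 2 n, pow_mul]
  simp only [map_neg, map_sub, map_pow, map_one]
  ring

theorem eval_eulerFactorPoly {a x : ℝ} (ha : a ≠ 0) {n : ℕ} (hx : x ^ n = (a ^ 2)⁻¹) :
    (eulerFactorPoly a n).eval x = eulerFactor a := by
  rw [eulerFactorPoly, eulerFactor_eq]
  simp only [eval_sub, eval_one, eval_pow, eval_X, eval_mul, eval_C, mul_comm 2 n, pow_mul, hx]
  field_simp
  ring

theorem abs_coeff_eulerFactorPoly_le {a : ℝ} (ha : 1 ≤ a) {n : ℕ} (hn : n ≠ 0) (m : ℕ) :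
    |(eulerFactorPoly a n).coeff m| ≤ (eulerFactorMajorant a n).coeff m := by
  simp only [eulerFactorPoly, eulerFactorMajorant, coeff_sub, coeff_add, coeff_one, coeff_C_mul,
    coeff_X_pow]
  split_ifs <;> first | omega | (rw [abs_le]; constructor <;> nlinarith)

theorem eval_eulerFactorMajorant_le {q : ℝ} (hq : 0 < q) (n : ℕ) :
    (eulerFactorMajorant (q ^ n) n).eval (5 / 4 * (q ^ 2)⁻¹) ≤ 1 + 2 * (25 / 16 / q / q) ^ n := by
  have hr : 5 / 4 * (q ^ 2)⁻¹ ≤ 25 / 16 / q / q := by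
    rw [div_div, ← sq, div_eq_mul_inv]
    exact mul_le_mul_of_nonneg_right (by norm_num) (by positivity)
  have hsq : (q ^ n) ^ 2 * (5 / 4 * (q ^ 2)⁻¹) ^ (2 * n) = (25 / 16 / q / q) ^ n := by
    rw [← pow_mul, pow_mul', pow_mul, ← mul_pow]
    congr 1
    field_simp
    norm_num
  simp only [eulerFactorMajorant, eval_add, eval_one, eval_pow, eval_X, eval_mul, eval_C]
  linarith [pow_le_pow_left₀ (by positivity) hr n]

variable (F : Type*) [Field F] [Fintype F]

noncomputable def weightedSquarefreeCount (d : ℕ) : ℕ :=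
  ∑ᶠ D ∈ {D : F[X] | D.Monic ∧ Squarefree D ∧ D.natDegree = d},
    ∏ᶠ Q ∈ {Q : F[X] | Q.Monic ∧ Irreducible Q ∧ Q ∣ D}, (Fintype.card F ^ Q.natDegree - 1)

noncomputable def squarefreeGenPoly (J : ℕ) : ℝ[X] :=
  ∏ Q ∈ monicIrreduciblesUpTo F J,
    (1 + C ((Fintype.card F : ℝ) ^ Q.natDegree - 1) * X ^ Q.natDegree)

noncomputable def mobiusGenPoly (J : ℕ) : ℝ[X] :=
  ∏ Q ∈ monicIrreduciblesUpTo F J,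
    (1 + C (-(Fintype.card F : ℝ) ^ Q.natDegree) * X ^ Q.natDegree)

noncomputable def eulerGenPoly (J : ℕ) : ℝ[X] :=
  ∏ Q ∈ monicIrreduciblesUpTo F J,
    eulerFactorPoly ((Fintype.card F : ℝ) ^ Q.natDegree) Q.natDegree

abbrev MonicIrreducible := {Q : F[X] // Q.Monic ∧ Irreducible Q}

variable {F}

theorem weightedSquarefreeCount_eq [DecidableEq F] (d : ℕ) :
    (weightedSquarefreeCount F d : ℝ)
      = ∑ S ∈ primeSets F d, ∏ Q ∈ S, ((Fintype.card F : ℝ) ^ Q.natDegree - 1) := by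
  classical
  have hD : {D : F[X] | D.Monic ∧ Squarefree D ∧ D.natDegree = d}
      = ↑({D ∈ monicsOfDegree F d | Squarefree D}) := by
    ext D
    simp [mem_monicsOfDegree, and_comm, and_left_comm]
  have hQ : ∀ D ∈ monicsOfDegree F d, {Q : F[X] | Q.Monic ∧ Irreducible Q ∧ Q ∣ D}
      = ↑(primeFactors D) := fun D hD => by
    ext Q
    simp [mem_primeFactors_iff (mem_monicsOfDegree.1 hD).1.ne_zero, and_assoc]
  rw [weightedSquarefreeCount, hD, finsum_mem_coe_finset,
    sum_congr rfl fun D hD' => by rw [hQ D (mem_filter.1 hD').1, finprod_mem_coe_finset],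
    sum_squarefree_eq_sum_primeSets (fun S => ∏ Q ∈ S, (Fintype.card F ^ Q.natDegree - 1)),
    Nat.cast_sum]
  refine sum_congr rfl fun S _ => ?_
  rw [Nat.cast_prod]
  refine prod_congr rfl fun Q _ => ?_
  rw [Nat.cast_sub (Nat.one_le_pow _ _ Fintype.card_pos), Nat.cast_pow, Nat.cast_one]

theorem coeff_squarefreeGenPoly [DecidableEq F] {j J : ℕ} (hj : j ≤ J) :
    (squarefreeGenPoly F J).coeff j = weightedSquarefreeCount F j := by
  rw [squarefreeGenPoly, coeff_prod_one_add_C_mul_X_pow, filter_powerset_monicIrreduciblesUpTo hj,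
    weightedSquarefreeCount_eq]

theorem coeff_mobiusGenPoly [DecidableEq F] {j J : ℕ} (hj : j ≤ J) :
    (mobiusGenPoly F J).coeff j = (1 - C ((Fintype.card F : ℝ) ^ 2) * X).coeff j := by
  rw [mobiusGenPoly, coeff_prod_one_add_C_mul_X_pow, filter_powerset_monicIrreduciblesUpTo hj]
  have hS : ∀ S ∈ primeSets F j, ∏ Q ∈ S, -(Fintype.card F : ℝ) ^ Q.natDegree
      = (((-1 : ℤ) ^ #S : ℤ) : ℝ) * (Fintype.card F : ℝ) ^ j := fun S hS => by
    rw [prod_neg, prod_pow_eq_pow_sum, (mem_primeSets.1 hS).2]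
    push_cast
    rfl
  rw [sum_congr rfl hS, ← sum_mul, ← Int.cast_sum, sum_primeSets_neg_one_pow, coeff_sub,
    coeff_one, coeff_C_mul, coeff_X]
  rcases j with _ | _ | j <;> simp
  ring

theorem eulerGenPoly_eq_mul (J : ℕ) :
    eulerGenPoly F J = mobiusGenPoly F J * squarefreeGenPoly F J := by
  rw [eulerGenPoly, mobiusGenPoly, squarefreeGenPoly, ← prod_mul_distrib]
  exact prod_congr rfl fun Q _ => eulerFactorPoly_eq_mul _ _

theorem sum_range_coeff_eulerGenPoly_mul_pow [DecidableEq F] (J : ℕ) :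
    ∑ j ∈ range (J + 1), (eulerGenPoly F J).coeff j * (((Fintype.card F : ℝ) ^ 2)⁻¹) ^ j
      = weightedSquarefreeCount F J * (((Fintype.card F : ℝ) ^ 2)⁻¹) ^ J := by
  have hq : ((Fintype.card F : ℝ) ^ 2) ≠ 0 := by have := Fintype.card_pos (α := F); positivity
  rw [← coeff_squarefreeGenPoly le_rfl, ← sum_range_coeff_one_sub_C_mul_X_mul hq]
  refine sum_congr rfl fun j hj => ?_
  rw [eulerGenPoly_eq_mul, coeff_mul_eq_of_coeff_eq fun k hk =>
    coeff_mobiusGenPoly (hk.trans (Nat.lt_succ_iff.1 (mem_range.1 hj)))]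

theorem eval_eulerGenPoly (J : ℕ) :
    (eulerGenPoly F J).eval ((Fintype.card F : ℝ) ^ 2)⁻¹
      = ∏ Q ∈ monicIrreduciblesUpTo F J, eulerFactor ((Fintype.card F : ℝ) ^ Q.natDegree) := by
  have hq : (Fintype.card F : ℝ) ≠ 0 := by have := Fintype.card_pos (α := F); positivity
  rw [eulerGenPoly, eval_prod]
  exact prod_congr rfl fun Q _ => eval_eulerFactorPoly (pow_ne_zero _ hq) (by
    rw [inv_pow, ← pow_mul, ← pow_mul, mul_comm])

theorem eval_prod_eulerFactorMajorant_le (J : ℕ) :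
    (∏ Q ∈ monicIrreduciblesUpTo F J,
        eulerFactorMajorant ((Fintype.card F : ℝ) ^ Q.natDegree) Q.natDegree).eval
      (5 / 4 * ((Fintype.card F : ℝ) ^ 2)⁻¹) ≤ Real.exp 10 := by
  have hq : (2 : ℝ) ≤ Fintype.card F := by exact_mod_cast Fintype.one_lt_card (α := F)
  have ht : 25 / 16 / (Fintype.card F : ℝ) ≤ 25 / 32 := by
    rw [div_le_iff₀ (by positivity)]
    linarith
  have hsum := sum_monicIrreduciblesUpTo_pow_le (F := F) (by positivity) (ht.trans_lt (by norm_num)) J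
  have hinv : (1 - 25 / 16 / (Fintype.card F : ℝ))⁻¹ ≤ 5 := by
    rw [inv_le_comm₀ (by linarith) (by norm_num)]
    linarith
  rw [eval_prod]
  calc _ ≤ ∏ Q ∈ monicIrreduciblesUpTo F J,
        (1 + 2 * (25 / 16 / (Fintype.card F : ℝ) / Fintype.card F) ^ Q.natDegree) :=
        prod_le_prod (fun Q _ => by simp only [eulerFactorMajorant, eval_add, eval_one, eval_pow,
          eval_X, eval_mul, eval_C]; positivity) fun Q _ => eval_eulerFactorMajorant_le (by linarith) _
    _ ≤ Real.exp (∑ Q ∈ monicIrreduciblesUpTo F J,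
          2 * (25 / 16 / (Fintype.card F : ℝ) / Fintype.card F) ^ Q.natDegree) :=
        Real.prod_one_add_le_exp_sum _ fun _ => by positivity
    _ ≤ Real.exp 10 := by
        rw [Real.exp_le_exp, ← mul_sum]
        linarith

theorem abs_weightedSquarefreeCount_mul_sub_prod_le [DecidableEq F] (J : ℕ) :
    |weightedSquarefreeCount F J * (((Fintype.card F : ℝ) ^ 2)⁻¹) ^ J
        - ∏ Q ∈ monicIrreduciblesUpTo F J, eulerFactor ((Fintype.card F : ℝ) ^ Q.natDegree)|
      ≤ Real.exp 10 * (4 / 5) ^ (J + 1) := by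
  have hq : (0 : ℝ) < (Fintype.card F : ℝ) := by exact_mod_cast Fintype.card_pos
  have hu : (0 : ℝ) < ((Fintype.card F : ℝ) ^ 2)⁻¹ := by positivity
  rw [← sum_range_coeff_eulerGenPoly_mul_pow, ← eval_eulerGenPoly, abs_sub_comm]
  refine (abs_eval_sub_sum_range_le (abs_coeff_prod_le _ _ _ fun Q hQ =>
    abs_coeff_eulerFactorPoly_le (one_le_pow₀ (by exact_mod_cast Fintype.card_pos))
      (mem_monicIrreduciblesUpTo.1 hQ).1.2.natDegree_pos.ne') hu.le
    (r := 5 / 4 * ((Fintype.card F : ℝ) ^ 2)⁻¹) (by positivity) (by linarith) J).trans ?_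
  rw [div_mul_cancel_right₀ hu.ne', inv_div]
  exact mul_le_mul_of_nonneg_right (eval_prod_eulerFactorMajorant_le J) (by positivity)

theorem summable_pow_natDegree {t : ℝ} (ht₀ : 0 ≤ t) (ht₁ : t < 1) :
    Summable fun Q : MonicIrreducible F => (t / Fintype.card F) ^ Q.1.natDegree := by
  classical
  refine summable_of_sum_le (c := (1 - t)⁻¹) (fun _ => by positivity) fun s => ?_
  have hs : s ⊆ (monicIrreduciblesUpTo F (s.sup fun Q => Q.1.natDegree)).subtype _ :=
    fun Q hQ => mem_subtype.2 (mem_monicIrreduciblesUpTo.2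
      ⟨Q.2, le_sup (f := fun Q : MonicIrreducible F => Q.1.natDegree) hQ⟩)
  refine (sum_le_sum_of_subset_of_nonneg hs fun _ _ _ => by positivity).trans ?_
  rw [sum_subtype_of_mem (fun Q => (t / Fintype.card F) ^ Q.natDegree)
    fun Q hQ => (mem_monicIrreduciblesUpTo.1 hQ).1]
  exact sum_monicIrreduciblesUpTo_pow_le ht₀ ht₁ _

theorem tendsto_prod_monicIrreduciblesUpTo {f : F[X] → ℝ}
    (hf : Multipliable fun Q : MonicIrreducible F => f Q) :
    Tendsto (fun J => ∏ Q ∈ monicIrreduciblesUpTo F J, f Q) atTop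
      (𝓝 (∏' Q : MonicIrreducible F, f Q)) := by
  classical
  have hmono : Monotone fun J =>
      (monicIrreduciblesUpTo F J).subtype fun Q => Q.Monic ∧ Irreducible Q :=
    fun _ _ hJ => subtype_mono (monicIrreduciblesUpTo_mono hJ)
  refine (hf.hasProd.comp (tendsto_atTop_finset_of_monotone hmono fun Q =>
    ⟨Q.1.natDegree, mem_subtype.2 (mem_monicIrreduciblesUpTo.2 ⟨Q.2, le_rfl⟩)⟩)).congr fun J => ?_
  exact prod_subtype_of_mem f fun Q hQ => (mem_monicIrreduciblesUpTo.1 hQ).1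

theorem summable_eulerFactor_sub_one :
    Summable fun Q : MonicIrreducible F =>
      eulerFactor ((Fintype.card F : ℝ) ^ Q.1.natDegree) - 1 := by
  have hq : (2 : ℝ) ≤ Fintype.card F := by exact_mod_cast Fintype.one_lt_card (α := F)
  refine ((summable_pow_natDegree (F := F) (t := (Fintype.card F : ℝ)⁻¹) (by positivity)
    (inv_lt_one_of_one_lt₀ (by linarith))).mul_left 2).of_norm_bounded fun Q => ?_
  rw [Real.norm_eq_abs, div_eq_mul_inv, ← sq, ← pow_mul, inv_pow, pow_mul']
  exact abs_eulerFactor_sub_one_le (one_le_pow₀ (by linarith))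

theorem multipliable_eulerFactor :
    Multipliable fun Q : MonicIrreducible F =>
      eulerFactor ((Fintype.card F : ℝ) ^ Q.1.natDegree) := by
  simpa using Real.multipliable_one_add_of_summable (summable_eulerFactor_sub_one (F := F))

theorem tprod_eulerFactor_pos :
    0 < ∏' Q : MonicIrreducible F, eulerFactor ((Fintype.card F : ℝ) ^ Q.1.natDegree) := by
  have hq : (2 : ℝ) ≤ Fintype.card F := by exact_mod_cast Fintype.one_lt_card (α := F)
  have hlog := Real.summable_log_one_add_of_summable (summable_eulerFactor_sub_one (F := F))
  simp only [add_sub_cancel] at hlog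
  rw [← Real.rexp_tsum_eq_tprod (fun Q => eulerFactor_pos (hq.trans
    (le_self_pow₀ (by linarith) Q.2.2.natDegree_pos.ne'))) hlog]
  exact Real.exp_pos _

theorem tendsto_weightedSquarefreeCount_div :
    Tendsto (fun d => (weightedSquarefreeCount F d : ℝ) / (Fintype.card F : ℝ) ^ (2 * d))
      atTop (𝓝 (∏' Q : MonicIrreducible F, eulerFactor ((Fintype.card F : ℝ) ^ Q.1.natDegree))) := by
  classical
  have herr : Tendsto (fun J : ℕ => Real.exp 10 * (4 / 5 : ℝ) ^ (J + 1)) atTop (𝓝 0) := by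
    have := ((tendsto_pow_atTop_nhds_zero_of_lt_one (by norm_num : (0 : ℝ) ≤ 4 / 5)
      (by norm_num)).comp (tendsto_add_atTop_nat 1)).const_mul (Real.exp 10)
    rwa [mul_zero] at this
  have hdiff : Tendsto (fun J => weightedSquarefreeCount F J * (((Fintype.card F : ℝ) ^ 2)⁻¹) ^ J
      - ∏ Q ∈ monicIrreduciblesUpTo F J, eulerFactor ((Fintype.card F : ℝ) ^ Q.natDegree))
      atTop (𝓝 0) :=
    squeeze_zero_norm (fun J => (Real.norm_eq_abs _).trans_le
      (abs_weightedSquarefreeCount_mul_sub_prod_le J)) herr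
  have hlim := hdiff.add (tendsto_prod_monicIrreduciblesUpTo
    (f := fun Q => eulerFactor ((Fintype.card F : ℝ) ^ Q.natDegree)) multipliable_eulerFactor)
  rw [zero_add] at hlim
  refine hlim.congr fun d => ?_
  rw [sub_add_cancel, pow_mul, div_eq_mul_inv, inv_pow]

end ArtinSchreierCount

open Polynomial

/-- Over a finite field `𝔽_q`, let `B(d) = ∑_D ∏_{Q ∣ D} (|Q| - 1)`, the sum over all
monic squarefree `D` of degree `d`, the product over distinct monic irreducible divisors
`Q` of `D`. Then `B(d)/q^{2d}` tends, as `d → ∞`, to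
`∏_Q (1 - 2|Q|^{-2} + |Q|^{-3})` over all monic irreducible `Q` (the family being
multipliable with positive product). -/
theorem stmt_17 (Fq : Type*) [Field Fq] [Fintype Fq]
    (B : ℕ → ℕ)
    (hB : ∀ d : ℕ, B d =
      ∑ᶠ D ∈ {D : Fq[X] | D.Monic ∧ Squarefree D ∧ D.natDegree = d},
        ∏ᶠ Q ∈ {Q : Fq[X] | Q.Monic ∧ Irreducible Q ∧ Q ∣ D},
          (Fintype.card Fq ^ Q.natDegree - 1)) :
    Multipliable (fun Q : {Q : Fq[X] // Q.Monic ∧ Irreducible Q} =>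
      1 - 2 * ((Fintype.card Fq : ℝ) ^ Q.1.natDegree) ^ (-2 : ℝ)
        + ((Fintype.card Fq : ℝ) ^ Q.1.natDegree) ^ (-3 : ℝ)) ∧
    0 < ∏' Q : {Q : Fq[X] // Q.Monic ∧ Irreducible Q},
      (1 - 2 * ((Fintype.card Fq : ℝ) ^ Q.1.natDegree) ^ (-2 : ℝ)
        + ((Fintype.card Fq : ℝ) ^ Q.1.natDegree) ^ (-3 : ℝ)) ∧
    Tendsto (fun d : ℕ => (B d : ℝ) / (Fintype.card Fq : ℝ) ^ (2 * d)) atTop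
      (𝓝 (∏' Q : {Q : Fq[X] // Q.Monic ∧ Irreducible Q},
        (1 - 2 * ((Fintype.card Fq : ℝ) ^ Q.1.natDegree) ^ (-2 : ℝ)
          + ((Fintype.card Fq : ℝ) ^ Q.1.natDegree) ^ (-3 : ℝ)))) := by
  obtain rfl : B = ArtinSchreierCount.weightedSquarefreeCount Fq := funext hB
  exact ⟨ArtinSchreierCount.multipliable_eulerFactor, ArtinSchreierCount.tprod_eulerFactor_pos,
    ArtinSchreierCount.tendsto_weightedSquarefreeCount_div⟩
end

section
/- Let n be an odd prime and let 𝔽_q be a finite field of characteristic 2 with gcd(q, n) = 1. With e_i(f), m(f) and the 'ordinary' condition defined as follows — for f ∈ 𝔽_q[x] monic and n-th-power-free, e_i(f) is the sum of deg Q over distinct monic irreducible Q dividing f to multiplicity exactly i; m(f) = ∑_{i=1}^{n-1} e_i(f) plus 1 if n does not divide deg f; f is 'ordinary' if either n divides deg f and e_i(f) = e_{n-i}(f) for all i, or n does not divide deg f and, with i₀ ∈ {1,…,n-1} the unique index such that deg f + i₀ ≡ 0 (mod n), e_{i₀}(f) + 1 = e_{n-i₀}(f) and e_j(f) = e_{n-j}(f)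 for all j ∉ {i₀, n-i₀} — then, as the real number X → ∞, #{f monic n-th-power-free : q^{m(f)} ≤ X and f ordinary} = O(X·(log X)^{(n-3)/2}). -/
/-!
A monic `n`-th-power-free `f` is the product `∏ fᵢ ^ i` of its parts `fᵢ`, the products of the
monic irreducible factors of multiplicity exactly `i`, and `deg fᵢ = eᵢ(f)`. Writing the
non-leading coefficients of `f₁, …, f_{n-1}` one after another encodes `f`, once the degrees are
known, by `e₁ + ⋯ + e_{n-1} ≤ m(f)` elements of `𝔽_q`.

For ordinary `f` the differences `eᵢ - e_{n-i}` depend only on `deg f mod n`, which together with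
`m(f)` also fixes `∑ eᵢ`; as `n` is odd, the vector `(eᵢ)` is then determined by `deg f mod n`,
`m(f)` and `e₁, …, e_{(n-3)/2}`. So at most `n (M+1)^{(n-3)/2} q^M` ordinary `f` have `m(f) = M`, and summing
over `q^M ≤ X` gives `O(X (log X)^{(n-3)/2})`.
-/

open Polynomial Filter Topology Asymptotics

open Finset UniqueFactorizationMonoid

namespace Polynomial

section ExactPart

variable {K : Type*} [Field K] [DecidableEq K]

noncomputable def exactFactors (f : K[X]) (i : ℕ) : Finset K[X] :=
  {Q ∈ (normalizedFactors f).toFinset | (normalizedFactors f).count Q = i}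

noncomputable def exactPart (f : K[X]) (i : ℕ) : K[X] := ∏ Q ∈ exactFactors f i, Q

theorem monic_of_mem_normalizedFactors {f Q : K[X]} (hQ : Q ∈ normalizedFactors f) :
    Q.Monic := by
  rw [← normalize_normalized_factor Q hQ]
  exact monic_normalize (irreducible_of_normalized_factor Q hQ).ne_zero

theorem Monic.count_normalizedFactors_eq_iff {f Q : K[X]} (hf : f ≠ 0) (hQ : Q.Monic)
    (hirr : Irreducible Q) {i : ℕ} :
    (normalizedFactors f).count Q = i ↔ Q ^ i ∣ f ∧ ¬ Q ^ (i + 1) ∣ f := by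
  rw [← emultiplicity_eq_coe, emultiplicity_eq_count_normalizedFactors hirr hf,
    hQ.normalize_eq_self, Nat.cast_inj]

theorem count_normalizedFactors_lt {f : K[X]} {n : ℕ}
    (hfree : ∀ Q : K[X], 0 < Q.natDegree → ¬ Q ^ n ∣ f) :
    ∀ Q ∈ normalizedFactors f, (normalizedFactors f).count Q < n := by
  intro Q hQ
  by_contra hle
  have hirr := irreducible_of_normalized_factor Q hQ
  have hf : f ≠ 0 := by rintro rfl; simp at hQ
  refine hfree Q hirr.natDegree_pos (pow_dvd_of_le_emultiplicity ?_)
  rw [emultiplicity_eq_count_normalizedFactors hirr hf, normalize_normalized_factor Q hQ]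
  exact_mod_cast not_lt.1 hle

theorem mem_exactFactors_iff {f : K[X]} (hf : f ≠ 0) {i : ℕ} (hi : i ≠ 0) {Q : K[X]} :
    Q ∈ exactFactors f i ↔ Q.Monic ∧ Irreducible Q ∧ Q ^ i ∣ f ∧ ¬ Q ^ (i + 1) ∣ f := by
  rw [exactFactors, mem_filter, Multiset.mem_toFinset]
  constructor
  · rintro ⟨hQ, hcount⟩
    have hmon := monic_of_mem_normalizedFactors hQ
    have hirr := irreducible_of_normalized_factor Q hQ
    exact ⟨hmon, hirr, (hmon.count_normalizedFactors_eq_iff hf hirr).1 hcount⟩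
  · rintro ⟨hmon, hirr, hdvd⟩
    have hcount := (hmon.count_normalizedFactors_eq_iff hf hirr).2 hdvd
    exact ⟨Multiset.count_pos.1 (hcount ▸ Nat.pos_of_ne_zero hi), hcount⟩

theorem monic_of_mem_exactFactors {f Q : K[X]} {i : ℕ} (hQ : Q ∈ exactFactors f i) : Q.Monic :=
  monic_of_mem_normalizedFactors (Multiset.mem_toFinset.1 (mem_filter.1 hQ).1)

theorem monic_exactPart (f : K[X]) (i : ℕ) : (exactPart f i).Monic :=
  monic_prod_of_monic _ _ fun _ => monic_of_mem_exactFactors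

theorem exactPart_zero (f : K[X]) : exactPart f 0 = 1 := by
  rw [exactPart, exactFactors, filter_false_of_mem fun Q hQ =>
    Multiset.count_ne_zero.2 (Multiset.mem_toFinset.1 hQ), prod_empty]

theorem finsum_natDegree_eq_natDegree_exactPart {f : K[X]} (hf : f ≠ 0) {i : ℕ} (hi : i ≠ 0) :
    ∑ᶠ Q ∈ {Q : K[X] | Q.Monic ∧ Irreducible Q ∧ Q ^ i ∣ f ∧ ¬ Q ^ (i + 1) ∣ f}, Q.natDegree
      = (exactPart f i).natDegree := by
  have hset : {Q : K[X] | Q.Monic ∧ Irreducible Q ∧ Q ^ i ∣ f ∧ ¬ Q ^ (i + 1) ∣ f}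
      = ↑(exactFactors f i) := by
    ext Q
    simp only [Set.mem_ofPred_eq, mem_coe, mem_exactFactors_iff hf hi]
  rw [hset, finsum_mem_coe_finset, exactPart,
    natDegree_prod_of_monic _ _ fun _ => monic_of_mem_exactFactors]

theorem Monic.prod_exactPart_pow {f : K[X]} (hf : f.Monic) {n : ℕ}
    (hfree : ∀ Q : K[X], 0 < Q.natDegree → ¬ Q ^ n ∣ f) :
    ∏ i ∈ range n, exactPart f i ^ i = f := by
  set s := normalizedFactors f
  calc ∏ i ∈ range n, exactPart f i ^ i
      = ∏ i ∈ range n, ∏ Q ∈ s.toFinset with s.count Q = i, Q ^ s.count Q := by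
        refine prod_congr rfl fun i _ => ?_
        rw [exactPart, exactFactors, ← prod_pow]
        exact prod_congr rfl fun Q hQ => by rw [(mem_filter.1 hQ).2]
    _ = ∏ Q ∈ s.toFinset, Q ^ s.count Q :=
        prod_fiberwise_of_maps_to (fun Q hQ =>
          mem_range.2 (count_normalizedFactors_lt hfree Q (Multiset.mem_toFinset.1 hQ))) _
    _ = f := by
        rw [← prod_multiset_count, prod_normalizedFactors_eq hf.ne_zero, hf.normalize_eq_self]

end ExactPart

section Concat

variable {R : Type*} [Semiring R]

def blockOffset (u : ℕ → R[X]) (i : ℕ) : ℕ := ∑ j ∈ range i, (u j).natDegree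

theorem blockOffset_add_le (u : ℕ → R[X]) {i j : ℕ} (hji : j < i) :
    blockOffset u j + (u j).natDegree ≤ blockOffset u i := by
  rw [blockOffset, ← sum_range_succ]
  exact sum_le_sum_of_subset (range_subset_range.2 hji)

/-- The coefficients of `u 0, …, u (N - 1)` below their degrees, written one after another. -/
noncomputable def concatEraseLead (N : ℕ) (u : ℕ → R[X]) : R[X] :=
  ∑ i ∈ range N, (u i).eraseLead * X ^ blockOffset u i

theorem coeff_concatEraseLead {N : ℕ} (u : ℕ → R[X]) {i t : ℕ} (hi : i < N)
    (ht : t < (u i).natDegree) :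
    (concatEraseLead N u).coeff (blockOffset u i + t) = (u i).coeff t := by
  rw [concatEraseLead, finsetSum_coeff, sum_eq_single_of_mem i (mem_range.2 hi)]
  · rw [add_comm, coeff_mul_X_pow, eraseLead_coeff_of_ne t ht.ne]
  · intro j _ hji
    rw [coeff_mul_X_pow']
    rcases lt_or_gt_of_ne hji with hlt | hgt
    · have := blockOffset_add_le u hlt
      rw [if_pos (by omega), ← notMem_support_iff]
      exact fun hmem => by have := lt_natDegree_of_mem_eraseLead_support hmem; omega
    · have := blockOffset_add_le u hgt
      rw [if_neg (by omega)]

theorem eq_of_coeff_concatEraseLead_eq {N : ℕ} {u w : ℕ → R[X]} (hu : ∀ i < N, (u i).Monic)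
    (hw : ∀ i < N, (w i).Monic) (hdeg : ∀ i < N, (u i).natDegree = (w i).natDegree)
    (hcoeff : ∀ s < blockOffset u N,
      (concatEraseLead N u).coeff s = (concatEraseLead N w).coeff s) :
    ∀ i < N, u i = w i := by
  intro i hi
  have hoff : blockOffset u i = blockOffset w i :=
    sum_congr rfl fun j hj => hdeg j ((mem_range.1 hj).trans hi)
  ext t
  rcases lt_trichotomy t (u i).natDegree with ht | ht | ht
  · have := blockOffset_add_le u hi
    have := hcoeff (blockOffset u i + t) (by omega)
    rwa [coeff_concatEraseLead u hi ht, hoff,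
      coeff_concatEraseLead w hi (hdeg i hi ▸ ht)] at this
  · rw [ht, (hu i hi).coeff_natDegree, hdeg i hi, (hw i hi).coeff_natDegree]
  · rw [coeff_eq_zero_of_natDegree_lt ht, coeff_eq_zero_of_natDegree_lt (hdeg i hi ▸ ht)]

end Concat

section Encoding

variable {K : Type*} [Field K] [DecidableEq K]

theorem blockOffset_exactPart (f : K[X]) {n : ℕ} (hn : 0 < n) :
    blockOffset (exactPart f) n = ∑ i ∈ Icc 1 (n - 1), (exactPart f i).natDegree := by
  rw [blockOffset, sum_range_eq_add_Ico _ hn, exactPart_zero, natDegree_one, zero_add,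
    ← Ico_add_one_right_eq_Icc, Nat.sub_add_cancel (Nat.one_le_iff_ne_zero.2 hn.ne')]

theorem injOn_coeff_concatEraseLead_exactPart {α : Type*} {n M : ℕ} {S : Set K[X]}
    (σ : K[X] → α) (hmonic : ∀ f ∈ S, f.Monic)
    (hfree : ∀ f ∈ S, ∀ Q : K[X], 0 < Q.natDegree → ¬ Q ^ n ∣ f)
    (hdeg : ∀ f ∈ S, ∀ g ∈ S, σ f = σ g →
      ∀ i < n, (exactPart f i).natDegree = (exactPart g i).natDegree)
    (hM : ∀ f ∈ S, blockOffset (exactPart f) n ≤ M) :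
    Set.InjOn (fun f => (σ f, fun t : Fin M => (concatEraseLead n (exactPart f)).coeff t)) S := by
  intro f hf g hg hfg
  obtain ⟨hσ, hcode⟩ := Prod.mk.inj hfg
  have hparts := eq_of_coeff_concatEraseLead_eq (fun i _ => monic_exactPart f i)
    (fun i _ => monic_exactPart g i) (hdeg f hf g hg hσ)
    (fun s hs => congrFun hcode ⟨s, hs.trans_le (hM f hf)⟩)
  rw [← (hmonic f hf).prod_exactPart_pow (hfree f hf),
    ← (hmonic g hg).prod_exactPart_pow (hfree g hg)]
  exact prod_congr rfl fun i hi => by rw [hparts i (mem_range.1 hi)]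

end Encoding

end Polynomial

section OrdinaryDegrees

/-- The paper's ordinarity condition on the degree vector `v = (eᵢ)` of a polynomial of
degree `D`. -/
def OrdinaryDegrees (n D : ℕ) (v : ℕ → ℕ) : Prop :=
  (n ∣ D ∧ ∀ i, 1 ≤ i → i ≤ n - 1 → v i = v (n - i)) ∨
  (¬ n ∣ D ∧ ∀ i₀, 1 ≤ i₀ → i₀ ≤ n - 1 → (D + i₀) % n = 0 →
    (v i₀ + 1 = v (n - i₀) ∧
      ∀ j, 1 ≤ j → j ≤ n - 1 → j ≠ i₀ → j ≠ n - i₀ → v j = v (n - j)))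

theorem Nat.add_sub_mod_mod_eq_zero {n : ℕ} (D : ℕ) (hn : 0 < n) :
    (D + (n - D % n)) % n = 0 := by
  have := Nat.div_add_mod D n
  have := Nat.mod_lt D hn
  rw [← Nat.dvd_iff_mod_eq_zero]
  exact ⟨D / n + 1, by rw [mul_add]; omega⟩

theorem OrdinaryDegrees.add_ite_eq {n D : ℕ} {v : ℕ → ℕ} (hn : Odd n)
    (h : OrdinaryDegrees n D v) {i : ℕ} (hi1 : 1 ≤ i) (hi2 : i ≤ n - 1) :
    v i + (if (D + i) % n = 0 then 1 else 0)
      = v (n - i) + (if (D + (n - i)) % n = 0 then 1 else 0) := by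
  have hn0 : 0 < n := hn.pos
  have hni_eq : n - (n - i) = i := Nat.sub_sub_self (by omega)
  rcases h with ⟨hD, hsymm⟩ | ⟨hD, hpair⟩
  · have hnot : ∀ j, 1 ≤ j → j ≤ n - 1 → (D + j) % n ≠ 0 := fun j hj1 hj2 hdvd =>
      absurd (Nat.le_of_dvd (by omega) ((Nat.dvd_add_right hD).1 (Nat.dvd_of_mod_eq_zero hdvd)))
        (by omega)
    rw [if_neg (hnot i hi1 hi2), if_neg (hnot (n - i) (by omega) (by omega)), hsymm i hi1 hi2]
  by_cases hi : (D + i) % n = 0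
  · -- `D + i` and `D + (n - i)` cannot both be divisible by the odd number `n`, as `n ∤ D`
    have hni : (D + (n - i)) % n ≠ 0 := fun hni => by
      have hsum := dvd_add (Nat.dvd_of_mod_eq_zero hi) (Nat.dvd_of_mod_eq_zero hni)
      rw [show D + i + (D + (n - i)) = n + D * 2 by omega, Nat.dvd_add_right (dvd_refl n)]
        at hsum
      exact hD (hn.coprime_two_right.dvd_of_dvd_mul_right hsum)
    rw [if_pos hi, if_neg hni, (hpair i hi1 hi2 hi).1, add_zero]
  by_cases hni : (D + (n - i)) % n = 0
  · have := (hpair (n - i) (by omega) (by omega) hni).1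
    rw [hni_eq] at this
    rw [if_neg hi, if_pos hni, this, add_zero]
  have hD0 : D % n ≠ 0 := fun h0 => hD (Nat.dvd_of_mod_eq_zero h0)
  have hi₀ := Nat.add_sub_mod_mod_eq_zero D hn0
  have := Nat.mod_lt D hn0
  rw [if_neg hi, if_neg hni]
  refine (hpair (n - D % n) (by omega) (by omega) hi₀).2 i hi1 hi2 ?_ ?_
  · rintro rfl
    exact hi hi₀
  · intro h
    rw [show n - i = n - D % n by omega] at hni
    exact hni hi₀

theorem eq_zero_of_reflect_eq_of_sum_eq_zero {h : ℕ} {δ : ℕ → ℤ}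
    (hsymm : ∀ i, 1 ≤ i → i ≤ 2 * h → δ (2 * h + 1 - i) = δ i)
    (hsum : ∑ i ∈ Icc 1 (2 * h), δ i = 0) (hlow : ∀ j, 1 ≤ j → j < h → δ j = 0) :
    ∀ i, 1 ≤ i → i ≤ 2 * h → δ i = 0 := by
  have hmid : 1 ≤ h → δ h = 0 := fun hh => by
    have hpair : δ (h + 1) = δ h := by
      convert hsymm h hh (by omega) using 2
      omega
    rw [sum_eq_add_of_mem h (h + 1) (by simp; omega) (by simp; omega) (by omega) ?_, hpair]
      at hsum
    · omega
    · intro j hj hne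
      rw [mem_Icc] at hj
      rcases lt_or_gt_of_ne hne.1 with hjh | hjh
      · exact hlow j hj.1 hjh
      · rw [← hsymm j hj.1 hj.2]
        exact hlow _ (by omega) (by omega)
  intro i hi1 hi2
  rcases lt_trichotomy i h with hih | rfl | hih
  · exact hlow i hi1 hih
  · exact hmid hi1
  · rw [← hsymm i hi1 hi2]
    rcases (by omega : 2 * h + 1 - i < h ∨ 2 * h + 1 - i = h) with hlt | heq
    · exact hlow _ (by omega) hlt
    · rw [heq]
      exact hmid (by omega)

theorem OrdinaryDegrees.eq_of_sum_eq {n D D' : ℕ} {v w : ℕ → ℕ} (hn : Odd n)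
    (hv : OrdinaryDegrees n D v) (hw : OrdinaryDegrees n D' w) (hD : D % n = D' % n)
    (hsum : ∑ i ∈ Icc 1 (n - 1), v i = ∑ i ∈ Icc 1 (n - 1), w i)
    (hlow : ∀ j, 1 ≤ j → j ≤ (n - 3) / 2 → v j = w j) :
    ∀ i, 1 ≤ i → i ≤ n - 1 → v i = w i := by
  obtain ⟨h, rfl⟩ := id hn
  have key := eq_zero_of_reflect_eq_of_sum_eq_zero (h := h) (δ := fun i => (v i : ℤ) - w i)
    (fun i hi1 hi2 => by
      have hvi := hv.add_ite_eq hn hi1 (by omega)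
      have hwi := hw.add_ite_eq hn hi1 (by omega)
      rw [← Nat.ModEq.add_right i hD, ← Nat.ModEq.add_right (2 * h + 1 - i) hD] at hwi
      split_ifs at hvi hwi <;> omega)
    (by simpa [sum_sub_distrib, sub_eq_zero] using congrArg (Nat.cast : ℕ → ℤ) hsum)
    (fun j hj1 hj2 => by simp [hlow j hj1 (by omega)])
  intro i hi1 hi2
  have := key i hi1 (by omega)
  omega

end OrdinaryDegrees

section Counting

variable {K : Type*} [Field K]

def ordinaryPolys (n : ℕ) (e : K[X] → ℕ → ℕ) : Set K[X] :=
  {f | f.Monic ∧ (∀ Q : K[X], 0 < Q.natDegree → ¬ Q ^ n ∣ f) ∧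
    OrdinaryDegrees n f.natDegree (e f)}

theorem degrees_eq_of_mem_ordinaryPolys {n : ℕ} (hn : Odd n) {e : K[X] → ℕ → ℕ}
    {m : K[X] → ℕ} (hm : ∀ f : K[X], m f =
      (∑ i ∈ Icc 1 (n - 1), e f i) + if n ∣ f.natDegree then 0 else 1)
    {f g : K[X]} (hf : f ∈ ordinaryPolys n e) (hg : g ∈ ordinaryPolys n e) (hmfg : m f = m g)
    (hD : f.natDegree % n = g.natDegree % n)
    (hlow : ∀ j, 1 ≤ j → j ≤ (n - 3) / 2 → e f j = e g j) :
    ∀ i, 1 ≤ i → i ≤ n - 1 → e f i = e g i := by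
  refine hf.2.2.eq_of_sum_eq hn hg.2.2 hD ?_ hlow
  have hdvd : n ∣ f.natDegree ↔ n ∣ g.natDegree := by simp only [Nat.dvd_iff_mod_eq_zero, hD]
  have hmf := hm f
  have hmg := hm g
  rw [if_congr hdvd rfl rfl] at hmf
  split_ifs at hmf hmg <;> omega

variable [Fintype K] [DecidableEq K]

theorem ordinaryPolys_inter_level_finite_ncard_le {n : ℕ} (hn : Odd n) {e : K[X] → ℕ → ℕ}
    (he : ∀ f : K[X], f ≠ 0 → ∀ i, i ≠ 0 → e f i = (exactPart f i).natDegree)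
    {m : K[X] → ℕ} (hm : ∀ f : K[X], m f =
      (∑ i ∈ Icc 1 (n - 1), e f i) + if n ∣ f.natDegree then 0 else 1) (M : ℕ) :
    (ordinaryPolys n e ∩ {f | m f = M}).Finite ∧
      (ordinaryPolys n e ∩ {f | m f = M}).ncard
        ≤ n * (M + 1) ^ ((n - 3) / 2) * Fintype.card K ^ M := by
  set S := ordinaryPolys n e ∩ {f | m f = M}
  have hsum_le : ∀ f ∈ S, ∑ i ∈ Icc 1 (n - 1), e f i ≤ M := fun f hf => by
    have : m f = M := hf.2
    have := hm f
    omega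
  have he_le : ∀ f ∈ S, ∀ i ∈ Icc 1 (n - 1), e f i ≤ M := fun f hf i hi =>
    (single_le_sum (fun _ _ => Nat.zero_le _) hi).trans (hsum_le f hf)
  -- capping `e f (j + 1)` at `M` loses nothing on `S`, by `he_le`
  let σ : K[X] → Fin n × (Fin ((n - 3) / 2) → Fin (M + 1)) := fun f =>
    (⟨f.natDegree % n, Nat.mod_lt _ hn.pos⟩, fun j => ⟨min (e f (j + 1)) M, by omega⟩)
  have hdeg : ∀ f ∈ S, ∀ g ∈ S, σ f = σ g →
      ∀ i < n, (exactPart f i).natDegree = (exactPart g i).natDegree := by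
    rintro f hf g hg hσ i hi
    obtain ⟨hD, hlow⟩ := Prod.mk.inj hσ
    rcases Nat.eq_zero_or_pos i with rfl | hi0
    · rw [exactPart_zero, exactPart_zero]
    rw [← he f hf.1.1.ne_zero i hi0.ne', ← he g hg.1.1.ne_zero i hi0.ne']
    refine degrees_eq_of_mem_ordinaryPolys hn hm hf.1 hg.1 (Eq.trans hf.2 (Eq.symm hg.2))
      (congrArg Fin.val hD) (fun j hj1 hj2 => ?_) i hi0 (by omega)
    have := congrArg Fin.val (congrFun hlow ⟨j - 1, by omega⟩)
    simp only [Nat.sub_add_cancel hj1] at this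
    have := he_le f hf j (mem_Icc.2 ⟨hj1, by omega⟩)
    have := he_le g hg j (mem_Icc.2 ⟨hj1, by omega⟩)
    omega
  have hinj := injOn_coeff_concatEraseLead_exactPart σ (fun f hf => hf.1.1)
    (fun f hf => hf.1.2.1) hdeg fun f hf => by
      rw [blockOffset_exactPart f hn.pos]
      refine le_of_eq_of_le (sum_congr rfl fun i hi => ?_) (hsum_le f hf)
      exact (he f hf.1.1.ne_zero i (Nat.one_le_iff_ne_zero.1 (mem_Icc.1 hi).1)).symm
  refine ⟨Set.Finite.of_injOn (Set.mapsTo_univ _ _) hinj Set.finite_univ, ?_⟩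
  calc S.ncard
      ≤ (Set.univ : Set ((Fin n × (Fin ((n - 3) / 2) → Fin (M + 1))) × (Fin M → K))).ncard :=
        Set.ncard_le_ncard_of_injOn _ (fun _ _ => Set.mem_univ _) hinj
    _ = n * (M + 1) ^ ((n - 3) / 2) * Fintype.card K ^ M := by
        simp [Set.ncard_univ, Fintype.card_prod, mul_assoc]

theorem ordinaryPolys_inter_sublevel_finite_ncard_le {n : ℕ} (hn : Odd n)
    {e : K[X] → ℕ → ℕ} (he : ∀ f : K[X], f ≠ 0 → ∀ i, i ≠ 0 → e f i = (exactPart f i).natDegree)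
    {m : K[X] → ℕ} (hm : ∀ f : K[X], m f =
      (∑ i ∈ Icc 1 (n - 1), e f i) + if n ∣ f.natDegree then 0 else 1) (B : ℕ) :
    (ordinaryPolys n e ∩ {f | m f ≤ B}).Finite ∧
      (ordinaryPolys n e ∩ {f | m f ≤ B}).ncard
        ≤ n * (B + 1) ^ ((n - 3) / 2) * Fintype.card K ^ (B + 1) := by
  have hlevel := ordinaryPolys_inter_level_finite_ncard_le hn he hm
  have hunion : ordinaryPolys n e ∩ {f | m f ≤ B}
      = ⋃ M ∈ range (B + 1), ordinaryPolys n e ∩ {f | m f = M} := by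
    ext f
    simp only [Set.mem_inter_iff, Set.mem_ofPred_eq, Set.mem_iUnion, mem_range, exists_prop]
    constructor
    · rintro ⟨hf, hB⟩
      exact ⟨m f, by omega, hf, rfl⟩
    · rintro ⟨M, hM, hf, rfl⟩
      exact ⟨hf, by omega⟩
  rw [hunion]
  refine ⟨Set.Finite.biUnion (finite_toSet _) fun M _ => (hlevel M).1, ?_⟩
  have hq : 2 ≤ Fintype.card K := Fintype.one_lt_card
  calc (⋃ M ∈ range (B + 1), ordinaryPolys n e ∩ {f | m f = M}).ncard
      ≤ ∑ M ∈ range (B + 1), n * (B + 1) ^ ((n - 3) / 2) * Fintype.card K ^ M :=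
        (set_ncard_biUnion_le _ _).trans <| sum_le_sum fun M hM =>
          (hlevel M).2.trans <| by gcongr; exact Nat.lt_succ_iff.1 (mem_range.1 hM)
    _ ≤ n * (B + 1) ^ ((n - 3) / 2) * Fintype.card K ^ (B + 1) := by
        rw [← mul_sum]
        exact Nat.mul_le_mul_left _ (Nat.geomSum_lt hq fun M hM => mem_range.1 hM).le

end Counting

theorem isBigO_mul_log_pow_of_abs_le {q : ℕ} (hq : 2 ≤ q) (k : ℕ) {C : ℝ} (hC : 0 ≤ C)
    {g : ℝ → ℝ} (hg : ∀ X, 1 ≤ X →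
      |g X| ≤ C * ((Nat.log q ⌊X⌋₊ : ℝ) + 1) ^ k * (q : ℝ) ^ (Nat.log q ⌊X⌋₊ + 1)) :
    g =O[atTop] fun X => X * Real.log X ^ k := by
  have hq1 : (1 : ℝ) < q := by exact_mod_cast hq
  have hlogq : 0 < Real.log q := Real.log_pos hq1
  refine isBigO_iff.2 ⟨C * (2 / Real.log q) ^ k * q, ?_⟩
  filter_upwards [eventually_ge_atTop (q : ℝ)] with X hXq
  have hX1 : 1 ≤ X := hq1.le.trans hXq
  set B := Nat.log q ⌊X⌋₊
  have hqB : (q : ℝ) ^ B ≤ X := by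
    have hN : ⌊X⌋₊ ≠ 0 := (Nat.floor_pos.2 hX1).ne'
    calc (q : ℝ) ^ B ≤ ⌊X⌋₊ := by exact_mod_cast Nat.pow_log_le_self q hN
      _ ≤ X := Nat.floor_le (by linarith)
  have hB : (B : ℝ) + 1 ≤ 2 / Real.log q * Real.log X := by
    have h1 : B * Real.log q ≤ Real.log X := by
      simpa [Real.log_pow] using Real.log_le_log (by positivity) hqB
    have h2 : Real.log q ≤ Real.log X := Real.log_le_log (by positivity) hXq
    rw [div_mul_eq_mul_div, le_div_iff₀ hlogq]
    nlinarith
  have hlogX : 0 ≤ Real.log X := Real.log_nonneg hX1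
  rw [Real.norm_eq_abs, Real.norm_of_nonneg (by positivity)]
  calc |g X| ≤ C * ((B : ℝ) + 1) ^ k * (q : ℝ) ^ (B + 1) := hg X hX1
    _ ≤ C * (2 / Real.log q * Real.log X) ^ k * (q * X) := by
        rw [pow_succ']
        gcongr
    _ = C * (2 / Real.log q) ^ k * q * (X * Real.log X ^ k) := by ring

theorem stmt_19_general (Fq : Type*) [Field Fq] [Fintype Fq]
    (n : ℕ) (hodd : Odd n)
    (e : Polynomial Fq → ℕ → ℕ)
    (he : ∀ (f : Fq[X]) (i : ℕ), e f i =
      ∑ᶠ Q ∈ {Q : Fq[X] | Q.Monic ∧ Irreducible Q ∧ Q ^ i ∣ f ∧ ¬ Q ^ (i + 1) ∣ f},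
        Q.natDegree)
    (m : Polynomial Fq → ℕ)
    (hm : ∀ f : Fq[X], m f =
      (∑ i ∈ Finset.Icc 1 (n - 1), e f i) + if n ∣ f.natDegree then 0 else 1)
    (ordinary : Polynomial Fq → Prop)
    (hord : ∀ f : Fq[X], ordinary f ↔
      ((n ∣ f.natDegree ∧ ∀ i, 1 ≤ i → i ≤ n - 1 → e f i = e f (n - i)) ∨
       (¬ n ∣ f.natDegree ∧ ∀ i₀, 1 ≤ i₀ → i₀ ≤ n - 1 → (f.natDegree + i₀) % n = 0 →
          (e f i₀ + 1 = e f (n - i₀) ∧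
            ∀ j, 1 ≤ j → j ≤ n - 1 → j ≠ i₀ → j ≠ n - i₀ → e f j = e f (n - j))))) :
    (fun X : ℝ =>
        ({f : Fq[X] | f.Monic ∧ (∀ Q : Fq[X], 0 < Q.natDegree → ¬ Q ^ n ∣ f) ∧
          (Fintype.card Fq : ℝ) ^ (m f) ≤ X ∧ ordinary f}.ncard : ℝ))
      =O[atTop] fun X : ℝ => X * Real.log X ^ ((n - 3) / 2) := by
  classical
  have hq : 2 ≤ Fintype.card Fq := Fintype.one_lt_card
  have he' : ∀ f : Fq[X], f ≠ 0 → ∀ i, i ≠ 0 → e f i = (exactPart f i).natDegree :=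
    fun f hf i hi => (he f i).trans (finsum_natDegree_eq_natDegree_exactPart hf hi)
  refine isBigO_mul_log_pow_of_abs_le hq _ (Nat.cast_nonneg n) fun X hX => ?_
  set B := Nat.log (Fintype.card Fq) ⌊X⌋₊
  obtain ⟨hfin, hcard⟩ := ordinaryPolys_inter_sublevel_finite_ncard_le hodd he' hm B
  have hsub : {f : Fq[X] | f.Monic ∧ (∀ Q : Fq[X], 0 < Q.natDegree → ¬ Q ^ n ∣ f) ∧
      (Fintype.card Fq : ℝ) ^ (m f) ≤ X ∧ ordinary f} ⊆ ordinaryPolys n e ∩ {f | m f ≤ B} :=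
    fun f ⟨hmon, hfree, hX, hf⟩ => ⟨⟨hmon, hfree, (hord f).1 hf⟩,
      Nat.le_log_of_pow_le hq (Nat.le_floor (by exact_mod_cast hX))⟩
  rw [abs_of_nonneg (Nat.cast_nonneg _)]
  exact_mod_cast (Set.ncard_le_ncard hsub hfin).trans hcard

/-- Let `n` be an odd prime and `𝔽_q` a finite field of characteristic 2 with
`gcd(q, n) = 1`. With `e_i(f)`, `m(f)` and the `ordinary` condition as in the paper,
the number of monic `n`-th-power-free `f ∈ 𝔽_q[x]` with `q^{m(f)} ≤ X` that are
ordinary is `O(X (log X)^{(n-3)/2})` as `X → ∞`. -/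
theorem stmt_19 (Fq : Type*) [Field Fq] [Fintype Fq] (hchar : ringChar Fq = 2)
    (n : ℕ) (hn : n.Prime) (hodd : Odd n) (hcop : Nat.Coprime (Fintype.card Fq) n)
    (e : Polynomial Fq → ℕ → ℕ)
    (he : ∀ (f : Fq[X]) (i : ℕ), e f i =
      ∑ᶠ Q ∈ {Q : Fq[X] | Q.Monic ∧ Irreducible Q ∧ Q ^ i ∣ f ∧ ¬ Q ^ (i + 1) ∣ f},
        Q.natDegree)
    (m : Polynomial Fq → ℕ)
    (hm : ∀ f : Fq[X], m f =
      (∑ i ∈ Finset.Icc 1 (n - 1), e f i) + if n ∣ f.natDegree then 0 else 1)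
    (ordinary : Polynomial Fq → Prop)
    (hord : ∀ f : Fq[X], ordinary f ↔
      ((n ∣ f.natDegree ∧ ∀ i, 1 ≤ i → i ≤ n - 1 → e f i = e f (n - i)) ∨
       (¬ n ∣ f.natDegree ∧ ∀ i₀, 1 ≤ i₀ → i₀ ≤ n - 1 → (f.natDegree + i₀) % n = 0 →
          (e f i₀ + 1 = e f (n - i₀) ∧
            ∀ j, 1 ≤ j → j ≤ n - 1 → j ≠ i₀ → j ≠ n - i₀ → e f j = e f (n - j))))) :
    (fun X : ℝ =>
        ({f : Fq[X] | f.Monic ∧ (∀ Q : Fq[X], 0 < Q.natDegree → ¬ Q ^ n ∣ f) ∧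
          (Fintype.card Fq : ℝ) ^ (m f) ≤ X ∧ ordinary f}.ncard : ℝ))
      =O[atTop] fun X : ℝ => X * Real.log X ^ ((n - 3) / 2) :=
  stmt_19_general Fq n hodd e he m hm ordinary hord
end
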